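/- arXiv:0803.2004 — 9 statements merged into one kernel-verified Lean document; each statement's English description precedes it below -/
import Mathlib

section
/- If the divided differences of order n of a sequence ω on a discrete set Λ ⊂ ℂ are uniformly bounded with respect to the weight p (i.e., ω ∈ X^n_p(Λ)), then the divided differences of order n−1 are also uniformly bounded with respect to p (i.e., ω ∈ X^{n-1}_p(Λ)). -/
open Complex Metric Set

noncomputable def divDiff : (k : ℕ) → (ℂ → ℂ) → (Fin (k+1) → ℂ) → ℂ
  | 0, ω, z => ω (z 0)
  | k+1, ω, z =>
      (divDiff k ω (fun i => z i.succ) - divDiff k ω (fun i => z i.castSucc)) /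
        (z (Fin.last (k+1)) - z 0)

/-- `p` is a weight on `ℂ`: nonnegative, `p(z) ≥ K log(1+|z|²)` for some `K > 0`,
and `p(z) ≤ D₀ p(w) + E₀` whenever `|z-w| ≤ 1`. -/
def IsWeight (p : ℂ → ℝ) : Prop :=
  (∀ z, 0 ≤ p z) ∧
  (∃ K > 0, ∀ z : ℂ, K * Real.log (1 + ‖z‖ ^ 2) ≤ p z) ∧
  (∃ D > 0, ∃ E > 0, ∀ z w : ℂ, ‖z - w‖ ≤ 1 → p z ≤ D * p w + E)

/-- `ω ∈ X^k_p(Λ)`: the divided differences of order `k` (on `k+1` distinct points of `Λ`)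
are uniformly bounded with respect to the weight `p`. -/
def MemX (p : ℂ → ℝ) (Λ : Set ℂ) (k : ℕ) (ω : ℂ → ℂ) : Prop :=
  ∃ A > 0, ∃ B > 0, ∀ z : Fin (k+1) → ℂ, (∀ i, z i ∈ Λ) → Function.Injective z →
    ‖divDiff k ω z‖ ≤ A * Real.exp (B * ∑ i, p (z i))

/-- `f ∈ A_p`: `f` is entire with `|f(z)| ≤ A e^{B p(z)}` for some `A, B > 0`. -/
def MemAp (p : ℂ → ℝ) (f : ℂ → ℂ) : Prop :=
  Differentiable ℂ f ∧ ∃ A > 0, ∃ B > 0, ∀ z, ‖f z‖ ≤ A * Real.exp (B * p z)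

/-- `Λ` is interpolating for `A_p`. -/
def Interpolating (p : ℂ → ℝ) (Λ : Set ℂ) : Prop :=
  ∀ ω : ℂ → ℂ, (∃ A > 0, ∃ B > 0, ∀ l ∈ Λ, ‖ω l‖ ≤ A * Real.exp (B * p l)) →
    ∃ f, MemAp p f ∧ ∀ l ∈ Λ, f l = ω l

/-- Uniform interpolation bounds (Lemma 2.2.6 of Berenstein–Gay). -/
def UnifInterp (p : ℂ → ℝ) (Λ : Set ℂ) : Prop :=
  ∀ A > 0, ∀ B > 0, ∃ A' > 0, ∃ B' > 0, ∀ ω : ℂ → ℂ,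
    (∀ l ∈ Λ, ‖ω l‖ ≤ A * Real.exp (B * p l)) →
    ∃ f, Differentiable ℂ f ∧ (∀ z, ‖f z‖ ≤ A' * Real.exp (B' * p z)) ∧
      ∀ l ∈ Λ, f l = ω l

/-- `Λ` is weakly separated: the disks `D(l, ε e^{-C p l})` are pairwise disjoint. -/
def WeaklySeparated (p : ℂ → ℝ) (Λ : Set ℂ) : Prop :=
  ∃ ε > 0, ∃ C > 0, ∀ l ∈ Λ, ∀ m ∈ Λ, l ≠ m →
    Disjoint (ball l (ε * Real.exp (-C * p l))) (ball m (ε * Real.exp (-C * p m)))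

/-- `Λ` has no accumulation points in `ℂ`. -/
def DiscreteSet (Λ : Set ℂ) : Prop := ∀ z : ℂ, ¬ AccPt z (Filter.principal Λ)

/-! Fix `2(n+1)` points `S ⊆ Λ`. Given distinct `z₀, …, zₙ ∈ Λ`, choose distinct `w₀, …, wₙ ∈ S`
avoiding them. Along `z₀, …, zₙ, w₀, …, wₙ`, two consecutive windows of `n+1` points have
order-`n` divided differences differing by `(w_j - z_j)` times an order-`(n+1)` divided
difference, so `Δⁿ(z) - Δⁿ(w)` is a sum of `n+1` such products, each controlled by `ω ∈ Xⁿ⁺¹_p`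
and by `|ζ| ≤ e^{p(ζ)/2K}` (from `(w1)`); and `Δⁿ(w)` takes only finitely many values. -/

theorem divDiff_window_succ_sub (n : ℕ) (ω : ℂ → ℂ) (u : ℕ → ℂ) (j : ℕ)
    (h : u (j + (n + 1)) ≠ u j) :
    divDiff n ω (fun i : Fin (n + 1) => u (j + 1 + i)) -
        divDiff n ω (fun i : Fin (n + 1) => u (j + i)) =
      (u (j + (n + 1)) - u j) * divDiff (n + 1) ω (fun i : Fin (n + 2) => u (j + i)) := by
  have htail :
      (fun i : Fin (n + 1) => u (j + i.succ)) = fun i : Fin (n + 1) => u (j + 1 + i) := by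
    funext i; simp only [Fin.val_succ]; ring_nf
  rw [divDiff, htail]
  simp only [Fin.val_castSucc, Fin.val_last, Fin.val_zero, add_zero]
  rw [mul_div_cancel₀ _ (sub_ne_zero.mpr h)]

open Finset in
theorem divDiff_window_sub_eq_sum (n : ℕ) (ω : ℂ → ℂ) (u : ℕ → ℂ) (m : ℕ)
    (hu : ∀ j < m, u (j + (n + 1)) ≠ u j) :
    divDiff n ω (fun i : Fin (n + 1) => u (m + i)) - divDiff n ω (fun i : Fin (n + 1) => u i) =
      ∑ j ∈ range m, (u (j + (n + 1)) - u j) *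
        divDiff (n + 1) ω (fun i : Fin (n + 2) => u (j + i)) := by
  have h := sum_range_sub (fun j => divDiff n ω (fun i : Fin (n + 1) => u (j + i))) m
  simp only [zero_add] at h
  rw [← h]
  exact sum_congr rfl fun j hj => divDiff_window_succ_sub n ω u j (hu j (mem_range.mp hj))

theorem le_exp_of_mul_log_one_add_sq_le {r K t : ℝ} (hr : 0 ≤ r) (hK : 0 < K)
    (h : K * Real.log (1 + r ^ 2) ≤ t) : r ≤ Real.exp (t / (2 * K)) := by
  have hlog : Real.log (1 + r ^ 2) ≤ t / K := by rw [le_div_iff₀ hK]; linarith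
  refine (pow_le_pow_iff_left₀ hr (Real.exp_pos _).le two_ne_zero).mp ?_
  calc r ^ 2 ≤ 1 + r ^ 2 := by linarith
    _ = Real.exp (Real.log (1 + r ^ 2)) := (Real.exp_log (by positivity)).symm
    _ ≤ Real.exp (t / K) := Real.exp_le_exp.mpr hlog
    _ = Real.exp (t / (2 * K)) ^ 2 := by rw [← Real.exp_nat_mul]; congr 1; field_simp; ring

theorem Finset.exists_append_injective {α : Type*} [DecidableEq α] {S : Finset α} {k m : ℕ}
    (hS : k + m ≤ S.card) (z : Fin k → α) (hz : Function.Injective z) :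
    ∃ w : Fin m → α, (∀ i, w i ∈ S) ∧ Function.Injective (Fin.append z w) := by
  have hcard : Fintype.card (Fin m) ≤ Fintype.card (S \ univ.image z : Finset α) := by
    have := le_card_sdiff (univ.image z) S
    have := card_image_le (s := univ) (f := z)
    simp only [Fintype.card_fin, Fintype.card_coe, card_univ] at *
    omega
  obtain ⟨e⟩ := Function.Embedding.nonempty_of_card_le hcard
  refine ⟨fun i => e i, fun i => (mem_sdiff.mp (e i).2).1, ?_⟩
  refine Fin.append_injective_iff.mpr ⟨hz, fun i j hij => e.injective (Subtype.ext hij), ?_⟩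
  intro i j hij
  exact (mem_sdiff.mp (e j).2).2 (mem_image.mpr ⟨i, mem_univ i, hij⟩)

open Finset in
theorem norm_divDiff_le_of_append_injective (n : ℕ) (ω : ℂ → ℂ) {T : Set ℂ} {R Q : ℝ}
    (hR : ∀ x ∈ T, ‖x‖ ≤ R)
    (hQ : ∀ v : Fin (n + 2) → ℂ, (∀ i, v i ∈ T) → Function.Injective v →
      ‖divDiff (n + 1) ω v‖ ≤ Q)
    (z w : Fin (n + 1) → ℂ) (hzT : ∀ i, z i ∈ T) (hwT : ∀ i, w i ∈ T)
    (hzw : Function.Injective (Fin.append z w)) :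
    ‖divDiff n ω z‖ ≤ ‖divDiff n ω w‖ + (n + 1) * (2 * R * Q) := by
  set u : ℕ → ℂ := fun m => if h : m < n + 1 + (n + 1) then Fin.append z w ⟨m, h⟩ else 0
  have huT : ∀ m < n + 1 + (n + 1), u m ∈ T := by
    intro m hm
    simp only [u, dif_pos hm]
    exact Fin.addCases (motive := fun k => Fin.append z w k ∈ T)
      (fun i => by rw [Fin.append_left]; exact hzT i)
      (fun i => by rw [Fin.append_right]; exact hwT i) ⟨m, hm⟩
  have hu : ∀ a < n + 1 + (n + 1), ∀ b < n + 1 + (n + 1), u a = u b → a = b := by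
    intro a ha b hb hab
    simp only [u, dif_pos ha, dif_pos hb] at hab
    exact congrArg Fin.val (hzw hab)
  have hz : (fun i : Fin (n + 1) => u i) = z := funext fun i => by
    simp only [u, dif_pos (by omega : (i : ℕ) < n + 1 + (n + 1))]
    exact Fin.append_left z w i
  have hw : (fun i : Fin (n + 1) => u (n + 1 + i)) = w := funext fun i => by
    simp only [u, dif_pos (by omega : n + 1 + (i : ℕ) < n + 1 + (n + 1))]
    exact Fin.append_right z w i
  have hdiff := divDiff_window_sub_eq_sum n ω u (n + 1) fun j hj h => by
    have := hu _ (by omega) _ (by omega) h; omega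
  rw [hz, hw] at hdiff
  have hterm : ∀ j ∈ range (n + 1), ‖(u (j + (n + 1)) - u j) *
      divDiff (n + 1) ω (fun i : Fin (n + 2) => u (j + i))‖ ≤ 2 * R * Q := by
    intro j hj
    have hj := mem_range.mp hj
    have hgap : ‖u (j + (n + 1)) - u j‖ ≤ 2 * R := by
      have := norm_sub_le (u (j + (n + 1))) (u j)
      linarith [hR _ (huT (j + (n + 1)) (by omega)), hR _ (huT j (by omega))]
    have hwindow := hQ (fun i : Fin (n + 2) => u (j + i)) (fun i => huT _ (by omega))
      fun a b hab => Fin.ext (by have := hu _ (by omega) _ (by omega) hab; omega)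
    rw [norm_mul]
    exact mul_le_mul hgap hwindow (norm_nonneg _) ((norm_nonneg _).trans hgap)
  calc ‖divDiff n ω z‖ ≤ ‖divDiff n ω w‖ + ‖divDiff n ω w - divDiff n ω z‖ :=
        norm_le_norm_add_norm_sub _ _
    _ ≤ ‖divDiff n ω w‖ + (n + 1) * (2 * R * Q) := by
      rw [hdiff]
      grw [norm_sum_le_of_le _ hterm]
      simp

open Finset in
theorem norm_divDiff_le_of_mul_log_le {p : ℂ → ℝ} {Λ : Set ℂ} {n : ℕ} {ω : ℂ → ℂ}
    {K A B t : ℝ} (hK : 0 < K) (hlog : ∀ z : ℂ, K * Real.log (1 + ‖z‖ ^ 2) ≤ p z)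
    (hA : 0 ≤ A) (hB : 0 ≤ B)
    (hX : ∀ v : Fin (n + 2) → ℂ, (∀ i, v i ∈ Λ) → Function.Injective v →
      ‖divDiff (n + 1) ω v‖ ≤ A * Real.exp (B * ∑ i, p (v i)))
    (z w : Fin (n + 1) → ℂ) (hz : ∀ i, z i ∈ Λ ∧ p (z i) ≤ t) (hw : ∀ i, w i ∈ Λ ∧ p (w i) ≤ t)
    (hzw : Function.Injective (Fin.append z w)) :
    ‖divDiff n ω z‖ ≤
      ‖divDiff n ω w‖ + 2 * (n + 1) * A * Real.exp ((1 / (2 * K) + B * (n + 2)) * t) := by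
  have hR : ∀ x ∈ {x | x ∈ Λ ∧ p x ≤ t}, ‖x‖ ≤ Real.exp (t / (2 * K)) :=
    fun x hx => le_exp_of_mul_log_one_add_sq_le (norm_nonneg x) hK ((hlog x).trans hx.2)
  have hQ : ∀ v : Fin (n + 2) → ℂ, (∀ i, v i ∈ {x | x ∈ Λ ∧ p x ≤ t}) →
      Function.Injective v → ‖divDiff (n + 1) ω v‖ ≤ A * Real.exp (B * ((n + 2) * t)) := by
    intro v hv hinj
    refine (hX v (fun i => (hv i).1) hinj).trans ?_
    gcongr
    calc ∑ i, p (v i) ≤ ∑ _i : Fin (n + 2), t := sum_le_sum fun i _ => (hv i).2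
      _ = (n + 2) * t := by simp
  have hexp : Real.exp (t / (2 * K)) * Real.exp (B * ((n + 2) * t)) =
      Real.exp ((1 / (2 * K) + B * (n + 2)) * t) := by
    rw [← Real.exp_add]; ring_nf
  linear_combination norm_divDiff_le_of_append_injective n ω hR hQ z w hz hw hzw +
    2 * (n + 1) * A * hexp

theorem stmt0_general (p : ℂ → ℝ) (hp : IsWeight p) (Λ : Set ℂ)
    (hΛ : Λ.Infinite) (n : ℕ) (ω : ℂ → ℂ)
    (h : MemX p Λ (n+1) ω) : MemX p Λ n ω := by
  obtain ⟨hp0, ⟨K, hK, hlog⟩, -⟩ := hp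
  obtain ⟨A, hA, B, hB, hX⟩ := h
  obtain ⟨S, hSΛ, hS⟩ := hΛ.exists_subset_card_eq (n + 1 + (n + 1))
  set P := ∑ x ∈ S, p x
  -- a crude bound for `‖Δⁿ‖` on the finitely many tuples from `S`
  set M := ∑ f : Fin (n + 1) → S, ‖divDiff n ω (fun i => (f i : ℂ))‖
  set c := 1 / (2 * K) + B * (n + 2)
  have hM : 0 ≤ M := Finset.sum_nonneg fun _ _ => norm_nonneg _
  refine ⟨M + 2 * (n + 1) * A * Real.exp (c * P), by positivity, c, by positivity,
    fun z hzΛ hz => ?_⟩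
  set s := ∑ i, p (z i)
  have hP : 0 ≤ P := Finset.sum_nonneg fun x _ => hp0 x
  have hs : 0 ≤ s := Finset.sum_nonneg fun i _ => hp0 (z i)
  obtain ⟨w, hwS, hzw⟩ := S.exists_append_injective hS.ge z hz
  have hwM : ‖divDiff n ω w‖ ≤ M :=
    Finset.single_le_sum (f := fun f : Fin (n + 1) → S => ‖divDiff n ω (fun i => (f i : ℂ))‖)
      (fun _ _ => norm_nonneg _) (Finset.mem_univ fun i => ⟨w i, hwS i⟩)
  have hzt : ∀ i, z i ∈ Λ ∧ p (z i) ≤ P + s := fun i => ⟨hzΛ i,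
    by linarith [Finset.single_le_sum (fun i _ => hp0 (z i)) (Finset.mem_univ i)]⟩
  have hwt : ∀ i, w i ∈ Λ ∧ p (w i) ≤ P + s := fun i => ⟨hSΛ (hwS i),
    by linarith [Finset.single_le_sum (fun x _ => hp0 x) (hwS i)]⟩
  have key : ‖divDiff n ω z‖ ≤
      ‖divDiff n ω w‖ + 2 * (n + 1) * A * (Real.exp (c * P) * Real.exp (c * s)) := by
    rw [← Real.exp_add, ← mul_add]
    exact norm_divDiff_le_of_mul_log_le hK hlog hA.le hB.le hX z w hzt hwt hzw
  have hcs : 1 ≤ Real.exp (c * s) := Real.one_le_exp (by positivity)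
  linarith [mul_le_mul_of_nonneg_left hcs hM]

theorem stmt0 (p : ℂ → ℝ) (hp : IsWeight p) (Λ : Set ℂ)
    (hΛd : DiscreteSet Λ) (hΛ : Λ.Infinite) (n : ℕ) (ω : ℂ → ℂ)
    (h : MemX p Λ (n+1) ω) : MemX p Λ n ω :=
  stmt0_general p hp Λ hΛ n ω h
end

section
/- For every entire function f in the Hörmander algebra A_p and every j ≥ 1, the divided differences of order j−1 of f satisfy |Δ^{j-1}f(z₁,…,z_j)| ≤ A e^{B[p(z₁)+⋯+p(z_j)]} for all tuples of distinct points (z₁,…,z_j) ∈ ℂ^j, for some constants A,B > 0 depending on f and j. -/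
/-!
If the points `z₀, …, zₖ` lie within distance `1` of `z₀`, the Cauchy integral formula on the
circle of radius `2` about `z₀`, `2πi · Δᵏf(z) = ∮ f(ζ) / ∏ⱼ (ζ - zⱼ) dζ`, bounds `Δᵏf(z)` by
twice the maximum of `|f|` on that circle, and condition (w2), applied twice, bounds this maximum
by `A e^{B p(z₀)}`. Otherwise two of the points are more than `1` apart. The same integral formula
on a large circle shows that `Δᵏf` is symmetric, so these two points may be taken to be the first
and the last, and then the recursion bounds `Δᵏf(z)` by two divided differences of order `k - 1`,
to which induction applies.
-/

open Complex Metric Set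

theorem inv_prod_succ_sub_inv_prod_castSucc {k : ℕ} (z : Fin (k + 2) → ℂ) {ζ : ℂ}
    (hζ : ∀ j, ζ ≠ z j) :
    (∏ j : Fin (k + 1), (ζ - z j.succ))⁻¹ - (∏ j : Fin (k + 1), (ζ - z j.castSucc))⁻¹ =
      (z (Fin.last (k + 1)) - z 0) * (∏ j, (ζ - z j))⁻¹ := by
  have hne : ∀ j, ζ - z j ≠ 0 := fun j => sub_ne_zero.2 (hζ j)
  have hsucc : ∏ j : Fin (k + 1), (ζ - z j.succ) ≠ 0 :=
    Finset.prod_ne_zero_iff.2 fun j _ => hne _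
  have hcast : ∏ j : Fin (k + 1), (ζ - z j.castSucc) ≠ 0 :=
    Finset.prod_ne_zero_iff.2 fun j _ => hne _
  have h_succ : ∏ j, (ζ - z j) = (ζ - z 0) * ∏ j : Fin (k + 1), (ζ - z j.succ) :=
    Fin.prod_univ_succ _
  have h_cast : ∏ j, (ζ - z j) = (∏ j : Fin (k + 1), (ζ - z j.castSucc)) *
      (ζ - z (Fin.last (k + 1))) :=
    Fin.prod_univ_castSucc _
  have hQ : ∏ j, (ζ - z j) ≠ 0 := Finset.prod_ne_zero_iff.2 fun j _ => hne j
  field_simp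
  linear_combination (∏ j : Fin (k + 1), (ζ - z j.castSucc)) * h_succ -
    (∏ j : Fin (k + 1), (ζ - z j.succ)) * h_cast

theorem circleIntegrable_inv_prod_mul {n : ℕ} {f : ℂ → ℂ} {c : ℂ} {R : ℝ} (hR : 0 ≤ R)
    (hf : ContinuousOn f (sphere c R)) {z : Fin n → ℂ} (hz : ∀ j, z j ∉ sphere c R) :
    CircleIntegrable (fun ζ => (∏ j, (ζ - z j))⁻¹ * f ζ) c R := by
  refine ContinuousOn.circleIntegrable hR (ContinuousOn.mul ?_ hf)
  refine (Continuous.continuousOn (by fun_prop)).inv₀ fun ζ hζ => ?_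
  exact Finset.prod_ne_zero_iff.2 fun j _ => sub_ne_zero.2 fun h => hz j (h ▸ hζ)

theorem circleIntegral_inv_prod_mul_eq_divDiff {f : ℂ → ℂ} {c : ℂ} {R : ℝ}
    (hf : DiffContOnCl ℂ f (ball c R)) :
    ∀ {k : ℕ} {z : Fin (k + 1) → ℂ}, Function.Injective z → (∀ i, z i ∈ ball c R) →
      ∮ ζ in C(c, R), (∏ j, (ζ - z j))⁻¹ * f ζ = 2 * Real.pi * I * divDiff k f z
  | 0, z, _, hz => by
    simpa [divDiff] using hf.circleIntegral_sub_inv_smul (hz 0)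
  | k + 1, z, hinj, hz => by
    have hR : 0 ≤ R := dist_nonneg.trans (mem_ball.1 (hz 0)).le
    have hz_sphere : ∀ i, z i ∉ sphere c R := fun i h =>
      (mem_ball.1 (hz i)).ne (mem_sphere.1 h)
    have hzl : z (Fin.last (k + 1)) - z 0 ≠ 0 :=
      sub_ne_zero.2 (hinj.ne (Fin.last_pos.ne'))
    have IH_succ := circleIntegral_inv_prod_mul_eq_divDiff hf (z := fun i => z i.succ)
      (hinj.comp (Fin.succ_injective _)) fun i => hz i.succ
    have IH_cast := circleIntegral_inv_prod_mul_eq_divDiff hf (z := fun i => z i.castSucc)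
      (hinj.comp (Fin.castSucc_injective _)) fun i => hz i.castSucc
    have hcont := hf.continuousOn_ball.mono sphere_subset_closedBall
    have key : (z (Fin.last (k + 1)) - z 0) * ∮ ζ in C(c, R), (∏ j, (ζ - z j))⁻¹ * f ζ =
        2 * Real.pi * I * (divDiff k f (fun i => z i.succ) -
          divDiff k f (fun i => z i.castSucc)) := by
      rw [← circleIntegral.integral_const_mul, mul_sub, ← IH_succ, ← IH_cast,
        ← circleIntegral.integral_sub
          (circleIntegrable_inv_prod_mul hR hcont fun i => hz_sphere _)
          (circleIntegrable_inv_prod_mul hR hcont fun i => hz_sphere _)]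
      refine circleIntegral.integral_congr hR fun ζ hζ => ?_
      have hζz : ∀ j, ζ ≠ z j := fun j h => hz_sphere j (h ▸ hζ)
      simp only [← sub_mul, inv_prod_succ_sub_inv_prod_castSucc z hζz, mul_assoc]
    rw [divDiff, mul_div_assoc', eq_div_iff hzl, ← key, mul_comm]

theorem divDiff_comp_perm {f : ℂ → ℂ} (hf : Differentiable ℂ f) {k : ℕ} {z : Fin (k + 1) → ℂ}
    (hinj : Function.Injective z) (σ : Equiv.Perm (Fin (k + 1))) :
    divDiff k f (z ∘ σ) = divDiff k f z := by
  obtain ⟨R, hR⟩ := (Set.finite_range z).isBounded.subset_ball 0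
  have hzR : ∀ i, z i ∈ ball 0 R := fun i => hR ⟨i, rfl⟩
  have h2πI : (2 * Real.pi * I : ℂ) ≠ 0 := by simp [Real.pi_ne_zero, I_ne_zero]
  refine mul_left_cancel₀ h2πI ?_
  rw [← circleIntegral_inv_prod_mul_eq_divDiff hf.diffContOnCl hinj hzR,
    ← circleIntegral_inv_prod_mul_eq_divDiff hf.diffContOnCl (hinj.comp σ.injective)
      fun i => hzR (σ i)]
  refine circleIntegral.integral_congr (dist_nonneg.trans (mem_ball.1 (hzR 0)).le) fun ζ _ => ?_
  simp only [Function.comp_apply, Equiv.prod_comp σ fun j => ζ - z j]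

theorem norm_divDiff_le_of_mem_closedBall {f : ℂ → ℂ} {c : ℂ} {r R M : ℝ}
    (hf : DiffContOnCl ℂ f (ball c R)) (hrR : r < R) (hM : ∀ ζ ∈ sphere c R, ‖f ζ‖ ≤ M)
    {k : ℕ} {z : Fin (k + 1) → ℂ} (hinj : Function.Injective z)
    (hz : ∀ i, z i ∈ closedBall c r) :
    ‖divDiff k f z‖ ≤ R * M / (R - r) ^ (k + 1) := by
  have hR : 0 ≤ R := (dist_nonneg.trans (mem_closedBall.1 (hz 0))).trans hrR.le
  have hintegrand : ∀ ζ ∈ sphere c R, ‖(∏ j, (ζ - z j))⁻¹ * f ζ‖ ≤ M / (R - r) ^ (k + 1) := by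
    intro ζ hζ
    have hdist : ∀ j, R - r ≤ ‖ζ - z j‖ := fun j => by
      rw [← dist_eq]
      linarith [dist_triangle ζ (z j) c, mem_sphere.1 hζ, mem_closedBall.1 (hz j)]
    have hprod : (R - r) ^ (k + 1) ≤ ‖∏ j, (ζ - z j)‖ := by
      rw [norm_prod]
      simpa using Finset.prod_le_prod (s := Finset.univ) (fun _ _ => (sub_pos.2 hrR).le)
        fun j _ => hdist j
    rw [norm_mul, norm_inv, inv_mul_eq_div]
    exact div_le_div₀ ((norm_nonneg _).trans (hM ζ hζ)) (hM ζ hζ)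
      (pow_pos (sub_pos.2 hrR) _) hprod
  have key := circleIntegral.norm_integral_le_of_norm_le_const hR hintegrand
  rw [circleIntegral_inv_prod_mul_eq_divDiff hf hinj
      fun i => closedBall_subset_ball hrR (hz i), norm_mul] at key
  have h2πI : ‖(2 * Real.pi * I : ℂ)‖ = 2 * Real.pi := by
    simp [Real.pi_pos.le]
  rw [h2πI, mul_assoc (2 * Real.pi) R] at key
  rw [mul_div_assoc]
  exact le_of_mul_le_mul_left key (by positivity)

theorem apply_le_of_norm_sub_le_two {p : ℂ → ℝ} {D E : ℝ} (hD : 0 ≤ D)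
    (hDE : ∀ z w : ℂ, ‖z - w‖ ≤ 1 → p z ≤ D * p w + E) {z w : ℂ} (h : ‖z - w‖ ≤ 2) :
    p z ≤ D * (D * p w + E) + E := by
  have hhalf : ‖(z - w) / 2‖ ≤ 1 := by
    rw [norm_div, Complex.norm_two]
    linarith
  calc p z ≤ D * p ((z + w) / 2) + E := hDE _ _ (by convert hhalf using 2; ring)
    _ ≤ D * (D * p w + E) + E := by
      gcongr
      exact hDE _ _ (by convert hhalf using 2; ring)

theorem norm_divDiff_le_of_norm_sub_le_one {p : ℂ → ℝ} {D E A₀ B₀ : ℝ} (hp0 : ∀ z, 0 ≤ p z)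
    (hD : 0 ≤ D) (hDE : ∀ z w : ℂ, ‖z - w‖ ≤ 1 → p z ≤ D * p w + E) {f : ℂ → ℂ}
    (hf : Differentiable ℂ f) (hA₀ : 0 ≤ A₀) (hB₀ : 0 ≤ B₀)
    (hfb : ∀ z, ‖f z‖ ≤ A₀ * Real.exp (B₀ * p z)) {k : ℕ} {z : Fin (k + 1) → ℂ}
    (hinj : Function.Injective z) (hz : ∀ i, ‖z i - z 0‖ ≤ 1) :
    ‖divDiff k f z‖ ≤
      2 * A₀ * Real.exp (B₀ * (D * E + E)) * Real.exp (B₀ * D ^ 2 * ∑ i, p (z i)) := by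
  have hp_sum : p (z 0) ≤ ∑ i, p (z i) :=
    Finset.single_le_sum (fun i _ => hp0 (z i)) (Finset.mem_univ 0)
  have hM : ∀ ζ ∈ sphere (z 0) 2,
      ‖f ζ‖ ≤ A₀ * Real.exp (B₀ * (D * E + E)) * Real.exp (B₀ * D ^ 2 * ∑ i, p (z i)) := by
    intro ζ hζ
    have hpζ := apply_le_of_norm_sub_le_two hD hDE (mem_sphere_iff_norm.1 hζ).le
    rw [mul_assoc, ← Real.exp_add]
    refine (hfb ζ).trans ?_
    gcongr
    nlinarith [mul_le_mul_of_nonneg_left hp_sum (sq_nonneg D)]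
  have := norm_divDiff_le_of_mem_closedBall hf.diffContOnCl one_lt_two hM hinj
    fun i => mem_closedBall_iff_norm.2 (hz i)
  norm_num [mul_assoc] at this ⊢
  exact this

theorem norm_divDiff_succ_le_of_one_lt_norm_sub {p : ℂ → ℝ} (hp0 : ∀ z, 0 ≤ p z) {f : ℂ → ℂ}
    (hf : Differentiable ℂ f) {k : ℕ} {A B : ℝ} (hA : 0 ≤ A) (hB : 0 ≤ B)
    (hbound : ∀ z : Fin (k + 1) → ℂ, Function.Injective z →
      ‖divDiff k f z‖ ≤ A * Real.exp (B * ∑ i, p (z i)))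
    {z : Fin (k + 2) → ℂ} (hinj : Function.Injective z) {i j : Fin (k + 2)}
    (hij : 1 < ‖z i - z j‖) :
    ‖divDiff (k + 1) f z‖ ≤ 2 * A * Real.exp (B * ∑ m, p (z m)) := by
  have hne : i ≠ j := by
    rintro rfl
    norm_num at hij
  obtain ⟨σ, hσ⟩ := Equiv.Perm.exists_extending_pair ![Fin.last (k + 1), 0] ![i, j]
    (by simp [Function.Injective, Fin.forall_fin_two])
    (by simp [Function.Injective, Fin.forall_fin_two, hne, hne.symm])
  set w := z ∘ σ
  have hsub : ∀ e : Fin (k + 1) → Fin (k + 2), Function.Injective e →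
      ‖divDiff k f (w ∘ e)‖ ≤ A * Real.exp (B * ∑ m, p (z m)) := by
    intro e he
    refine (hbound _ ((hinj.comp σ.injective).comp he)).trans ?_
    gcongr
    calc ∑ m, p (w (e m)) = ∑ m ∈ Finset.univ.map ⟨e, he⟩, p (w m) :=
          (Finset.sum_map _ ⟨e, he⟩ fun m => p (w m)).symm
      _ ≤ ∑ m, p (w m) := Finset.sum_le_univ_sum_of_nonneg fun _ => hp0 _
      _ = ∑ m, p (z m) := Equiv.sum_comp σ fun m => p (z m)
  have hden : 1 ≤ ‖w (Fin.last (k + 1)) - w 0‖ := by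
    simpa [w] using hσ 0 ▸ hσ 1 ▸ hij.le
  rw [← divDiff_comp_perm hf hinj σ, divDiff, norm_div]
  calc _ ≤ ‖divDiff k f (w ∘ Fin.succ) - divDiff k f (w ∘ Fin.castSucc)‖ :=
        div_le_self (norm_nonneg _) hden
    _ ≤ ‖divDiff k f (w ∘ Fin.succ)‖ + ‖divDiff k f (w ∘ Fin.castSucc)‖ := norm_sub_le _ _
    _ ≤ 2 * A * Real.exp (B * ∑ m, p (z m)) := by
      linarith [hsub _ (Fin.succ_injective _), hsub _ (Fin.castSucc_injective _)]

theorem stmt1 (p : ℂ → ℝ) (hp : IsWeight p) (f : ℂ → ℂ) (hf : MemAp p f) (k : ℕ) :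
    ∃ A > 0, ∃ B > 0, ∀ z : Fin (k+1) → ℂ, Function.Injective z →
      ‖divDiff k f z‖ ≤ A * Real.exp (B * ∑ i, p (z i)) := by
  obtain ⟨hp0, -, D, hD, E, -, hDE⟩ := hp
  obtain ⟨hf, A₀, hA₀, B₀, hB₀, hfb⟩ := hf
  induction k with
  | zero => exact ⟨A₀, hA₀, B₀, hB₀, fun z _ => by simpa [divDiff] using hfb (z 0)⟩
  | succ k ih =>
    obtain ⟨A, hA, B, hB, hbound⟩ := ih
    refine ⟨2 * A + 2 * A₀ * Real.exp (B₀ * (D * E + E)), by positivity, B + B₀ * D ^ 2,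
      by positivity, fun z hz => ?_⟩
    have hsum : 0 ≤ ∑ m, p (z m) := Finset.sum_nonneg fun m _ => hp0 _
    by_cases hfar : ∃ i j, 1 < ‖z i - z j‖
    · obtain ⟨i, j, hij⟩ := hfar
      refine (norm_divDiff_succ_le_of_one_lt_norm_sub hp0 hf hA.le hB.le hbound hz hij).trans ?_
      gcongr ?_ * Real.exp (?_ * _)
      · exact le_add_of_nonneg_right (by positivity)
      · exact le_add_of_nonneg_right (by positivity)
    · push Not at hfar
      refine (norm_divDiff_le_of_norm_sub_le_one hp0 hD.le hDE hf hA₀.le hB₀.le hfb hz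
        fun i => hfar i 0).trans ?_
      gcongr ?_ * Real.exp (?_ * _)
      · exact le_add_of_nonneg_left (by positivity)
      · exact le_add_of_nonneg_left hB.le
end

section
/- If Λ ⊂ ℂ is weakly separated with respect to the weight p, then X⁰_p(Λ) = X^n_p(Λ) for every n ∈ ℕ; i.e., every function on Λ with values bounded by A e^{Bp(λ)} has all its divided differences of every order uniformly bounded with respect to p. -/
/-!
Weak separation bounds the denominator `z_{n+1} - z_0` of a divided difference from below by
`ε e^{-C p(z_0)}`, so raising the order costs only a factor `e^{C Σ p(z_i)}`.
Conversely, fix distinct points `μ₀, …, μ_{n-1}` of `Λ`. For `l` outside them, the Newton recursion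
`Δᵐ(l, μ₀, …, μ_{m-1}) = Δᵐ(μ₀, …, μ_m) - (μ_m - l) Δᵐ⁺¹(l, μ₀, …, μ_m)` descends from
`Δⁿ(l, μ₀, …, μ_{n-1})` to `Δ⁰(l) = ω(l)`, and each step only multiplies by `μ_m - l`, which grows
like `e^{c p(l)}` because `p(z) ≥ K log(1 + |z|²)`.
-/

open Complex Metric Set

def WeightBounded (p : ℂ → ℝ) (S : Set ℂ) (f : ℂ → ℂ) : Prop :=
  ∃ A > 0, ∃ B > 0, ∀ z ∈ S, ‖f z‖ ≤ A * Real.exp (B * p z)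

theorem exp_mul_le_exp_add_mul {x B' : ℝ} (B : ℝ) (hx : 0 ≤ x) (hB' : 0 ≤ B') :
    Real.exp (B * x) ≤ Real.exp ((B + B') * x) :=
  Real.exp_le_exp.mpr (by nlinarith)

namespace WeightBounded

variable {p : ℂ → ℝ} {S T : Set ℂ} {f g : ℂ → ℂ}

theorem of_le (hp : ∀ z, 0 ≤ p z) (A B : ℝ)
    (h : ∀ z ∈ S, ‖f z‖ ≤ A * Real.exp (B * p z)) : WeightBounded p S f := by
  refine ⟨max A 1, by positivity, max B 1, by positivity, fun z hz => (h z hz).trans ?_⟩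
  calc A * Real.exp (B * p z) ≤ max A 1 * Real.exp (B * p z) := by gcongr; exact le_max_left _ _
    _ ≤ max A 1 * Real.exp (max B 1 * p z) :=
      mul_le_mul_of_nonneg_left
        (Real.exp_le_exp.mpr (mul_le_mul_of_nonneg_right (le_max_left _ _) (hp z))) (by positivity)

theorem mono (h : WeightBounded p T f) (hST : S ⊆ T) : WeightBounded p S f :=
  let ⟨A, hA, B, hB, hf⟩ := h
  ⟨A, hA, B, hB, fun z hz => hf z (hST hz)⟩

theorem congr (h : WeightBounded p S f) (hfg : EqOn f g S) : WeightBounded p S g :=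
  let ⟨A, hA, B, hB, hf⟩ := h
  ⟨A, hA, B, hB, fun z hz => hfg hz ▸ hf z hz⟩

theorem const (hp : ∀ z, 0 ≤ p z) (c : ℂ) : WeightBounded p S fun _ => c :=
  of_le hp ‖c‖ 0 fun z _ => by simp

theorem of_finite (hp : ∀ z, 0 ≤ p z) (hS : S.Finite) : WeightBounded p S f := by
  obtain ⟨M, hM⟩ := (hS.image (‖f ·‖)).bddAbove
  exact of_le hp M 0 fun z hz => by simpa using hM (mem_image_of_mem _ hz)

theorem union (hp : ∀ z, 0 ≤ p z) (hS : WeightBounded p S f) (hT : WeightBounded p T f) :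
    WeightBounded p (S ∪ T) f := by
  obtain ⟨A₁, hA₁, B₁, hB₁, hf₁⟩ := hS
  obtain ⟨A₂, hA₂, B₂, hB₂, hf₂⟩ := hT
  refine of_le hp (A₁ + A₂) (B₁ + B₂) fun z hz => ?_
  have h₁ := exp_mul_le_exp_add_mul B₁ (hp z) hB₂.le
  have h₂ := exp_mul_le_exp_add_mul B₂ (hp z) hB₁.le
  rw [add_comm B₂] at h₂
  rcases hz with hz | hz
  · nlinarith [hf₁ z hz, Real.exp_pos ((B₁ + B₂) * p z)]
  · nlinarith [hf₂ z hz, Real.exp_pos ((B₁ + B₂) * p z)]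

theorem sub (hp : ∀ z, 0 ≤ p z) (hf : WeightBounded p S f) (hg : WeightBounded p S g) :
    WeightBounded p S (f - g) := by
  obtain ⟨A₁, hA₁, B₁, hB₁, hf⟩ := hf
  obtain ⟨A₂, hA₂, B₂, hB₂, hg⟩ := hg
  refine of_le hp (A₁ + A₂) (B₁ + B₂) fun z hz => ?_
  have h₁ := exp_mul_le_exp_add_mul B₁ (hp z) hB₂.le
  have h₂ := exp_mul_le_exp_add_mul B₂ (hp z) hB₁.le
  rw [add_comm B₂] at h₂
  calc ‖(f - g) z‖ ≤ ‖f z‖ + ‖g z‖ := norm_sub_le _ _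
    _ ≤ A₁ * Real.exp (B₁ * p z) + A₂ * Real.exp (B₂ * p z) := add_le_add (hf z hz) (hg z hz)
    _ ≤ (A₁ + A₂) * Real.exp ((B₁ + B₂) * p z) := by nlinarith

theorem mul (hp : ∀ z, 0 ≤ p z) (hf : WeightBounded p S f) (hg : WeightBounded p S g) :
    WeightBounded p S (f * g) := by
  obtain ⟨A₁, hA₁, B₁, hB₁, hf⟩ := hf
  obtain ⟨A₂, hA₂, B₂, hB₂, hg⟩ := hg
  refine of_le hp (A₁ * A₂) (B₁ + B₂) fun z hz => ?_
  calc ‖(f * g) z‖ = ‖f z‖ * ‖g z‖ := norm_mul _ _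
    _ ≤ A₁ * Real.exp (B₁ * p z) * (A₂ * Real.exp (B₂ * p z)) :=
      mul_le_mul (hf z hz) (hg z hz) (norm_nonneg _) (by positivity)
    _ = A₁ * A₂ * Real.exp ((B₁ + B₂) * p z) := by rw [add_mul, Real.exp_add]; ring

end WeightBounded

theorem IsWeight.weightBounded_id {p : ℂ → ℝ} (hp : IsWeight p) (S : Set ℂ) :
    WeightBounded p S id := by
  obtain ⟨hp0, ⟨K, hK, hKp⟩, -⟩ := hp
  refine WeightBounded.of_le hp0 1 (1 / (2 * K)) fun z _ => ?_
  have hlog : 1 + ‖z‖ ^ 2 ≤ Real.exp (p z / K) :=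
    (Real.log_le_iff_le_exp (by positivity)).mp ((le_div_iff₀' hK).mpr (hKp z))
  have hsq : Real.exp (p z / K) = Real.exp (1 / (2 * K) * p z) ^ 2 := by
    rw [← Real.exp_nat_mul]; congr 1; field_simp; ring
  rw [one_mul, id, ← pow_le_pow_iff_left₀ (norm_nonneg z) (Real.exp_pos _).le two_ne_zero]
  linarith

theorem divDiff_zero (ω : ℂ → ℂ) (z : Fin 1 → ℂ) : divDiff 0 ω z = ω (z 0) :=
  rfl

theorem memX_zero_iff {p : ℂ → ℝ} {Λ : Set ℂ} {ω : ℂ → ℂ} :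
    MemX p Λ 0 ω ↔ WeightBounded p Λ ω := by
  refine ⟨fun ⟨A, hA, B, hB, h⟩ => ⟨A, hA, B, hB, fun l hl => ?_⟩,
    fun ⟨A, hA, B, hB, h⟩ => ⟨A, hA, B, hB, fun z hz _ => ?_⟩⟩
  · simpa [divDiff_zero] using
      h (fun _ => l) (fun _ => hl) fun i j _ => Subsingleton.elim (α := Fin 1) i j
  · simpa [divDiff_zero] using h (z 0) (hz 0)

theorem divDiff_succ (k : ℕ) (ω : ℂ → ℂ) (z : Fin (k + 2) → ℂ) :
    divDiff (k + 1) ω z =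
      (divDiff k ω (Fin.tail z) - divDiff k ω (Fin.init z)) / (z (Fin.last (k + 1)) - z 0) :=
  rfl

theorem divDiff_init {k : ℕ} (ω : ℂ → ℂ) {z : Fin (k + 2) → ℂ}
    (hz : z (Fin.last (k + 1)) ≠ z 0) :
    divDiff k ω (Fin.init z) =
      divDiff k ω (Fin.tail z) - (z (Fin.last (k + 1)) - z 0) * divDiff (k + 1) ω z := by
  rw [divDiff_succ, mul_div_cancel₀ _ (sub_ne_zero.mpr hz)]
  ring

theorem WeaklySeparated.exists_le_norm_sub {p : ℂ → ℝ} {Λ : Set ℂ} (hw : WeaklySeparated p Λ) :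
    ∃ ε > 0, ∃ C > 0, ∀ l ∈ Λ, ∀ m ∈ Λ, l ≠ m → ε * Real.exp (-C * p l) ≤ ‖m - l‖ := by
  obtain ⟨ε, hε, C, hC, hsep⟩ := hw
  refine ⟨ε, hε, C, hC, fun l hl m hm hlm => ?_⟩
  by_contra! hlt
  have hml : m ∈ ball l (ε * Real.exp (-C * p l)) := by rwa [mem_ball, dist_eq]
  exact (hsep l hl m hm hlm).ne_of_mem hml (mem_ball_self (by positivity)) rfl

theorem memX_succ_of_memX {p : ℂ → ℝ} {Λ : Set ℂ} {n : ℕ} {ω : ℂ → ℂ} (hp : ∀ z, 0 ≤ p z)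
    (hw : WeaklySeparated p Λ) (h : MemX p Λ n ω) : MemX p Λ (n + 1) ω := by
  obtain ⟨ε, hε, C, hC, hsep⟩ := hw.exists_le_norm_sub
  obtain ⟨A, hA, B, hB, hω⟩ := h
  refine ⟨2 * A / ε, by positivity, B + C, by positivity, fun z hz hinj => ?_⟩
  have htail : ∑ i : Fin (n + 1), p (z i.succ) ≤ ∑ i, p (z i) := by
    rw [Fin.sum_univ_succ (fun i => p (z i))]
    exact le_add_of_nonneg_left (hp _)
  have hinit : ∑ i : Fin (n + 1), p (z i.castSucc) ≤ ∑ i, p (z i) := by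
    rw [Fin.sum_univ_castSucc (fun i => p (z i))]
    exact le_add_of_nonneg_right (hp _)
  have h0 : p (z 0) ≤ ∑ i, p (z i) :=
    Finset.single_le_sum (fun i _ => hp (z i)) (Finset.mem_univ _)
  set S := ∑ i, p (z i)
  have hnum : ‖divDiff n ω (Fin.tail z) - divDiff n ω (Fin.init z)‖ ≤
      2 * A * Real.exp (B * S) :=
    calc _ ≤ ‖divDiff n ω (Fin.tail z)‖ + ‖divDiff n ω (Fin.init z)‖ := norm_sub_le _ _
      _ ≤ A * Real.exp (B * S) + A * Real.exp (B * S) := by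
        gcongr
        · exact (hω _ (fun i => hz _) (hinj.comp (Fin.succ_injective _))).trans (by gcongr)
        · exact (hω _ (fun i => hz _) (hinj.comp (Fin.castSucc_injective _))).trans (by gcongr)
      _ = 2 * A * Real.exp (B * S) := by ring
  have hden : ε * Real.exp (-C * S) ≤ ‖z (Fin.last (n + 1)) - z 0‖ := by
    refine le_trans ?_ (hsep _ (hz 0) _ (hz _) (hinj.ne Fin.last_pos.ne))
    exact mul_le_mul_of_nonneg_left (Real.exp_le_exp.mpr (by nlinarith)) hε.le
  rw [divDiff_succ, norm_div]
  calc _ ≤ 2 * A * Real.exp (B * S) / (ε * Real.exp (-C * S)) :=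
        div_le_div₀ (by positivity) hnum (by positivity) hden
    _ = 2 * A / ε * Real.exp ((B + C) * S) := by
        rw [add_mul, Real.exp_add, neg_mul, Real.exp_neg]
        field_simp

theorem divDiff_cons {m : ℕ} (ω : ℂ → ℂ) (μ : ℕ → ℂ) {l : ℂ} (hl : μ m ≠ l) :
    divDiff m ω (Fin.cons l fun i : Fin m => μ i) =
      divDiff m ω (fun i : Fin (m + 1) => μ i) -
        (μ m - l) * divDiff (m + 1) ω (Fin.cons l fun i : Fin (m + 1) => μ i) := by
  have hinit : Fin.init (Fin.cons l fun i : Fin (m + 1) => μ i : Fin (m + 2) → ℂ) =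
      Fin.cons l fun i : Fin m => μ i := by
    funext i; cases i using Fin.cases <;> rfl
  rw [← hinit, divDiff_init ω, Fin.tail_cons]
  · rfl
  · exact hl

theorem weightBounded_divDiff_cons {p : ℂ → ℝ} {Λ : Set ℂ} {n : ℕ} {ω : ℂ → ℂ}
    (hp : IsWeight p) {μ : ℕ → ℂ} (hμ : Function.Injective μ) (hμΛ : ∀ i, μ i ∈ Λ)
    (h : MemX p Λ n ω) {m : ℕ} (hm : m ≤ n) :
    WeightBounded p (Λ \ μ '' Iio n) fun l => divDiff m ω (Fin.cons l fun i : Fin m => μ i) := by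
  induction hm using Nat.decreasingInduction with
  | self =>
    obtain ⟨A, hA, B, hB, hω⟩ := h
    refine .of_le hp.1 (A * Real.exp (B * ∑ i : Fin n, p (μ i))) B fun l hl => ?_
    have hmem : ∀ i, (Fin.cons l fun i : Fin n => μ i : Fin (n + 1) → ℂ) i ∈ Λ := by
      intro i; cases i using Fin.cases
      exacts [hl.1, hμΛ _]
    have hinj : Function.Injective (Fin.cons l fun i : Fin n => μ i : Fin (n + 1) → ℂ) := by
      refine Fin.cons_injective_iff.mpr ⟨?_, fun i j hij => Fin.ext (hμ hij)⟩
      rintro ⟨i, rfl⟩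
      exact hl.2 ⟨i, i.isLt, rfl⟩
    refine (hω _ hmem hinj).trans_eq ?_
    simp only [Fin.sum_univ_succ, Fin.cons_zero, Fin.cons_succ, mul_add, Real.exp_add]
    ring
  | of_succ k hk ih =>
    have hid := hp.weightBounded_id (Λ \ μ '' Iio n)
    refine ((WeightBounded.const hp.1 (divDiff k ω fun i : Fin (k + 1) => μ i)).sub hp.1
      (((WeightBounded.const hp.1 (μ k)).sub hp.1 hid).mul hp.1 ih)).congr fun l hl => ?_
    exact (divDiff_cons ω μ fun hkl => hl.2 ⟨k, hk, hkl⟩).symm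

theorem memX_zero_of_memX {p : ℂ → ℝ} {Λ : Set ℂ} {n : ℕ} {ω : ℂ → ℂ} (hp : IsWeight p)
    (h : MemX p Λ n ω) : MemX p Λ 0 ω := by
  rcases Λ.finite_or_infinite with hfin | hinf
  · exact memX_zero_iff.mpr (.of_finite hp.1 hfin)
  set e := hinf.natEmbedding Λ
  have hμ : Function.Injective ((↑) ∘ e : ℕ → ℂ) := Subtype.val_injective.comp e.injective
  have hgen := weightBounded_divDiff_cons hp hμ (fun i => (e i).2) h n.zero_le
  have hexc : WeightBounded p (((↑) ∘ e) '' Iio n) ω := .of_finite hp.1 ((finite_Iio n).image _)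
  exact memX_zero_iff.mpr ((hgen.union hp.1 hexc).mono (subset_sdiff_union _ _))

theorem stmt3_general (p : ℂ → ℝ) (hp : IsWeight p) (Λ : Set ℂ)
    (hw : WeaklySeparated p Λ) :
    ∀ (n : ℕ) (ω : ℂ → ℂ), MemX p Λ 0 ω ↔ MemX p Λ n ω := by
  intro n ω
  refine ⟨fun h => ?_, memX_zero_of_memX hp⟩
  induction n with
  | zero => exact h
  | succ n ih => exact memX_succ_of_memX hp.1 hw ih

theorem stmt3 (p : ℂ → ℝ) (hp : IsWeight p) (Λ : Set ℂ) (hΛ : Λ.Infinite)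
    (hw : WeaklySeparated p Λ) :
    ∀ (n : ℕ) (ω : ℂ → ℂ), MemX p Λ 0 ω ↔ MemX p Λ n ω :=
  stmt3_general p hp Λ hw
end

section
/- If there exist constants ε>0 and C>0 such that every disk D(λ, ε e^{−Cp(λ)}), λ ∈ Λ, contains at most n points of Λ, then Λ can be written as the union of n weakly separated sequences. -/
open Complex Metric Set

/-!
Join two points `l ≠ m` of `Λ` when `|l - m| < ρ l + ρ m`, where `ρ = ε₁ e^{-C₁ p}`. Because `p`
grows at most affinely over unit distances, for suitable `ε₁, C₁` every neighbour of `l` lies in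
`D(l, ε e^{-C p(l)})`, so each vertex has fewer than `n` neighbours. Colouring greedily along a
well-order of `Λ` then needs only `n` colours, and within one colour class the disks of radius `ρ`
are pairwise disjoint.
-/

namespace SimpleGraph

variable {V : Type*} (G : SimpleGraph V) {n : ℕ}

theorem exists_color_notMem_of_encard_neighborSet_lt {v : V} (hn : (G.neighborSet v).encard < n)
    (r : V → V → Prop) (c : ∀ w, r w v → Fin n) :
    ∃ i : Fin n, ∀ w (hw : r w v), G.Adj v w → c w hw ≠ i := by
  have : Nonempty (Fin n) := ⟨⟨0, by exact_mod_cast pos_of_gt hn⟩⟩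
  classical
  let g : V → Fin n := fun w => if hw : r w v then c w hw else Classical.arbitrary _
  have hused : g '' G.neighborSet v ≠ univ := by
    intro h
    have := (encard_image_le g _).trans_lt hn
    rw [h, encard_univ, ENat.card_eq_coe_fintype_card, Fintype.card_fin] at this
    exact this.false
  obtain ⟨i, hi⟩ := (ne_univ_iff_exists_notMem _).mp hused
  refine ⟨i, fun w hw hvw hwi => hi ⟨w, hvw, ?_⟩⟩
  simp only [g, dif_pos hw, hwi]

theorem colorable_of_encard_neighborSet_lt (h : ∀ v, (G.neighborSet v).encard < n) :
    G.Colorable n := by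
  let r : V → V → Prop := WellOrderingRel
  choose color hcolor using fun v c => G.exists_color_notMem_of_encard_neighborSet_lt (h v) r c
  let c : V → Fin n := IsWellFounded.wf.fix color
  have hc : ∀ v, c v = color v (fun w _ => c w) := IsWellFounded.wf.fix_eq color
  refine ⟨Coloring.mk c fun {v w} hvw => ?_⟩
  rcases trichotomous_of r v w with hvw' | rfl | hwv
  · rw [hc w]; exact hcolor w (fun u _ => c u) v hvw' hvw.symm
  · exact (G.irrefl hvw).elim
  · rw [hc v]; exact (hcolor v (fun u _ => c u) w hwv hvw).symm

end SimpleGraph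

theorem exists_iUnion_eq_forall_pairwiseDisjoint_ball {α : Type*} [PseudoMetricSpace α]
    (s : Set α) (ρ : α → ℝ) {n : ℕ}
    (h : ∀ x ∈ s, {y ∈ s | y ≠ x ∧ dist y x < ρ x + ρ y}.encard < n) :
    ∃ t : Fin n → Set α, s = ⋃ j, t j ∧ ∀ j, (t j).PairwiseDisjoint fun x => ball x (ρ x) := by
  let G : SimpleGraph s :=
    { Adj := fun x y => x ≠ y ∧ dist (y : α) x < ρ x + ρ y
      symm := ⟨fun x y ⟨hne, hd⟩ => ⟨hne.symm, by rwa [dist_comm, add_comm]⟩⟩ }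
  have hdeg : ∀ x, (G.neighborSet x).encard < n := fun x => by
    have himage : Subtype.val '' G.neighborSet x = {y ∈ s | y ≠ x ∧ dist y x < ρ x + ρ y} := by
      ext y
      simp only [SimpleGraph.neighborSet, ne_eq, Subtype.ext_iff, mem_image, mem_ofPred_eq, eq_comm,
        Subtype.exists, exists_and_left, exists_prop, exists_eq_right_right', sep_and,
        mem_inter_iff, G]
      tauto
    rw [← Subtype.val_injective.injOn.encard_image, himage]
    exact h x x.2
  obtain ⟨c⟩ := G.colorable_of_encard_neighborSet_lt hdeg
  refine ⟨fun j => Subtype.val '' (c ⁻¹' {j}), ?_, fun j => ?_⟩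
  · ext x
    simp
  · rintro _ ⟨x, rfl, rfl⟩ _ ⟨y, hy, rfl⟩ hxy
    refine ball_disjoint_ball (not_lt.mp fun hd => c.valid ⟨?_, ?_⟩ hy.symm)
    · exact fun e => hxy (congrArg Subtype.val e)
    · rwa [dist_comm]

theorem IsWeight.exists_le_mul_add {p : ℂ → ℝ} (hp : IsWeight p) :
    ∃ D ≥ 1, ∃ E ≥ 0, ∀ z w : ℂ, dist w z ≤ 1 → p z ≤ D * p w + E := by
  obtain ⟨hp0, -, D, -, E, hE, hpDE⟩ := hp
  refine ⟨max D 1, le_max_right D 1, E, hE.le, fun z w hzw => ?_⟩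
  have := hpDE z w (by rwa [← dist_eq, dist_comm])
  nlinarith [hp0 w, le_max_left D 1]

theorem IsWeight.exists_dist_lt_of_dist_lt_add_radius {p : ℂ → ℝ} (hp : IsWeight p) {ε C : ℝ}
    (hε : 0 < ε) (hC : 0 < C) :
    ∃ ε₁ > 0, ∃ C₁ > 0, ∀ z w : ℂ,
      dist w z < ε₁ * Real.exp (-C₁ * p z) + ε₁ * Real.exp (-C₁ * p w) →
        dist w z < ε * Real.exp (-C * p z) := by
  obtain ⟨D, hD, E, hE, hpDE⟩ := hp.exists_le_mul_add
  have hp0 := hp.1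
  set ε₁ := min (1 / 2) (ε * Real.exp (-(C * E)) / 2)
  have hε₁ : 0 < ε₁ := lt_min one_half_pos (by positivity)
  have h2ε₁ : 2 * ε₁ ≤ ε * Real.exp (-(C * E)) := by
    have := min_le_right (1 / 2 : ℝ) (ε * Real.exp (-(C * E)) / 2); linarith
  set ρ : ℂ → ℝ := fun x => ε₁ * Real.exp (-(C * D) * p x)
  have hself : ∀ z, 2 * ρ z ≤ ε * Real.exp (-C * p z) := fun z => by
    have hε₁ε : 2 * ε₁ ≤ ε :=
      h2ε₁.trans (mul_le_of_le_one_right hε.le (Real.exp_le_one_iff.mpr (by nlinarith)))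
    have hexp : Real.exp (-(C * D) * p z) ≤ Real.exp (-C * p z) :=
      Real.exp_le_exp.mpr (by nlinarith [mul_nonneg (sub_nonneg.mpr hD) (mul_nonneg hC.le (hp0 z))])
    calc 2 * ρ z = 2 * ε₁ * Real.exp (-(C * D) * p z) := by ring
      _ ≤ ε * Real.exp (-C * p z) := mul_le_mul hε₁ε hexp (Real.exp_pos _).le hε.le
  have hother : ∀ z w, dist w z ≤ 1 → 2 * ρ w ≤ ε * Real.exp (-C * p z) := fun z w hzw => by
    have hexp : Real.exp (-(C * D) * p w) ≤ Real.exp (C * E) * Real.exp (-C * p z) := by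
      rw [← Real.exp_add, Real.exp_le_exp]
      nlinarith [hpDE z w hzw]
    calc 2 * ρ w = 2 * ε₁ * Real.exp (-(C * D) * p w) := by ring
      _ ≤ ε * Real.exp (-(C * E)) * (Real.exp (C * E) * Real.exp (-C * p z)) :=
        mul_le_mul h2ε₁ hexp (Real.exp_pos _).le (by positivity)
      _ = ε * Real.exp (-C * p z) := by
        rw [← mul_assoc, mul_assoc ε, ← Real.exp_add, neg_add_cancel, Real.exp_zero, mul_one]
  refine ⟨ε₁, hε₁, C * D, by positivity, fun z w hzw => ?_⟩
  rcases le_total (ρ z) (ρ w) with hρzw | hρwz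
  · have hρw : 2 * ρ w ≤ 1 := by
      have := min_le_left (1 / 2 : ℝ) (ε * Real.exp (-(C * E)) / 2)
      have hexp : Real.exp (-(C * D) * p w) ≤ 1 := Real.exp_le_one_iff.mpr
        (by nlinarith [mul_nonneg (mul_nonneg hC.le (zero_le_one.trans hD)) (hp0 w)])
      nlinarith [Real.exp_pos (-(C * D) * p w)]
    exact hzw.trans_le ((by linarith : ρ z + ρ w ≤ 2 * ρ w).trans (hother z w (by linarith)))
  · exact hzw.trans_le ((by linarith : ρ z + ρ w ≤ 2 * ρ z).trans (hself z))

theorem Set.encard_sdiff_singleton_lt_of_encard_le {α : Type*} {s : Set α} {a : α} {n : ℕ}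
    (ha : a ∈ s) (hs : s.encard ≤ n) : (s \ {a}).encard < n :=
  ((finite_of_encard_le_coe hs).sdiff.encard_lt_encard (sdiff_singleton_ssubset.mpr ha)).trans_le hs

theorem stmt5_general (p : ℂ → ℝ) (hp : IsWeight p) (Λ : Set ℂ) (n : ℕ)
    (h : ∃ ε > 0, ∃ C > 0, ∀ l ∈ Λ,
      (Λ ∩ ball l (ε * Real.exp (-C * p l))).encard ≤ n) :
    ∃ Λs : Fin n → Set ℂ, Λ = ⋃ j, Λs j ∧ ∀ j, WeaklySeparated p (Λs j) := by
  obtain ⟨ε, hε, C, hC, hcount⟩ := h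
  obtain ⟨ε₁, hε₁, C₁, hC₁, hnear⟩ := hp.exists_dist_lt_of_dist_lt_add_radius hε hC
  have hdeg : ∀ l ∈ Λ, {m ∈ Λ | m ≠ l ∧
      dist m l < ε₁ * Real.exp (-C₁ * p l) + ε₁ * Real.exp (-C₁ * p m)}.encard < n := by
    intro l hl
    have hsub : {m ∈ Λ | m ≠ l ∧
        dist m l < ε₁ * Real.exp (-C₁ * p l) + ε₁ * Real.exp (-C₁ * p m)} ⊆
        (Λ ∩ ball l (ε * Real.exp (-C * p l))) \ {l} :=
      fun m ⟨hm, hml, hd⟩ => ⟨⟨hm, hnear l m hd⟩, hml⟩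
    have hl_mem : l ∈ Λ ∩ ball l (ε * Real.exp (-C * p l)) := ⟨hl, mem_ball_self (by positivity)⟩
    exact (encard_le_encard hsub).trans_lt
      (encard_sdiff_singleton_lt_of_encard_le hl_mem (hcount l hl))
  obtain ⟨Λs, hcover, hdisj⟩ := exists_iUnion_eq_forall_pairwiseDisjoint_ball Λ _ hdeg
  exact ⟨Λs, hcover, fun j => ⟨ε₁, hε₁, C₁, hC₁, hdisj j⟩⟩

theorem stmt5 (p : ℂ → ℝ) (hp : IsWeight p) (Λ : Set ℂ) (hΛd : DiscreteSet Λ)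
    (n : ℕ) (hn : 1 ≤ n)
    (h : ∃ ε > 0, ∃ C > 0, ∀ l ∈ Λ,
      (Λ ∩ ball l (ε * Real.exp (-C * p l))).encard ≤ n) :
    ∃ Λs : Fin n → Set ℂ, Λ = ⋃ j, Λs j ∧ ∀ j, WeaklySeparated p (Λs j) :=
  stmt5_general p hp Λ n h
end

section
/- Suppose that for all ε>0 and C>0 there exists λ ∈ Λ with more than n points of Λ in D(λ, ε e^{−Cp(λ)}) (i.e., Λ is not a union of n weakly separated sequences in the quantitative sense). Then X^{n-1}_p(Λ) ≠ X^n_p(Λ): there exists a function ω on Λ whose divided differences of order n−1 are uniformly bounded with respect to p but whose divided differences of order n are not. -/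
/-!
Choose `bₙ ∈ Λ` with `‖bₙ‖ → ∞` such that a disk `D(bₙ, rₙ)` contains more than `k + 1` points
of `Λ`, where `rₙ · exp (n (1 + (k + 2)(D p(bₙ) + E))) < 1`, and let `ω(bₙ)` be the least product
of the distances from `bₙ` to at most `k` points of `Λ` within distance `1` of it, `ω = 0`
elsewhere. In the Lagrange form `Δᵏω = ∑ₓ ω(x) / ∏_{y ≠ x} (x - y)` every term then has modulus
at most `1`, so `ω ∈ Xᵏ_p(Λ)`. On the `k + 2` nodes formed by `bₙ`, a minimising `k`-set and
further points of the disk, only the `bₙ` term survives and `|Δᵏ⁺¹ω| ≥ 1 / rₙ`, which beats any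
bound `A e^{B ∑ p}` once `n ≥ A, B`.
-/

open Complex Metric Set

open Filter Topology

section FinsetDivDiff

variable {K : Type*} [Field K] [DecidableEq K]

def finsetDivDiff (ω : K → K) (V : Finset K) : K :=
  ∑ x ∈ V, ω x / ∏ y ∈ V.erase x, (x - y)

-- The factor `x - a` kills the term `x = a`, so the sum over `V.erase a` extends to all of `V`.
theorem finsetDivDiff_erase (ω : K → K) {V : Finset K} {a : K} (ha : a ∈ V) :
    finsetDivDiff ω (V.erase a) = ∑ x ∈ V, ω x * (x - a) / ∏ y ∈ V.erase x, (x - y) := by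
  rw [← Finset.add_sum_erase V _ ha, sub_self, mul_zero, zero_div, zero_add, finsetDivDiff]
  refine Finset.sum_congr rfl fun x hx => ?_
  have hxa : x ≠ a := Finset.ne_of_mem_erase hx
  rw [← Finset.prod_erase_mul _ _ (Finset.mem_erase.2 ⟨hxa.symm, ha⟩), Finset.erase_right_comm,
    mul_div_mul_right _ _ (sub_ne_zero.2 hxa)]

theorem finsetDivDiff_erase_sub_erase_div (ω : K → K) {V : Finset K} {a b : K} (ha : a ∈ V)
    (hb : b ∈ V) (hab : a ≠ b) :
    (finsetDivDiff ω (V.erase a) - finsetDivDiff ω (V.erase b)) / (b - a) =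
      finsetDivDiff ω V := by
  rw [finsetDivDiff_erase ω ha, finsetDivDiff_erase ω hb, ← Finset.sum_sub_distrib,
    div_eq_iff (sub_ne_zero.2 hab.symm), finsetDivDiff, Finset.sum_mul]
  exact Finset.sum_congr rfl fun x _ => by ring

theorem finsetDivDiff_eq_of_eq_zero {ω : K → K} {V : Finset K} {b : K} (hb : b ∈ V)
    (hω : ∀ x ∈ V, x ≠ b → ω x = 0) :
    finsetDivDiff ω V = ω b / ∏ y ∈ V.erase b, (b - y) :=
  Finset.sum_eq_single_of_mem b hb fun x hx hxb => by rw [hω x hx hxb, zero_div]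

end FinsetDivDiff

theorem norm_finsetDivDiff_le_card {K : Type*} [NormedField K] [DecidableEq K] {ω : K → K}
    {V : Finset K} (hω : ∀ x ∈ V, ‖ω x‖ ≤ ∏ y ∈ V.erase x, dist x y) :
    ‖finsetDivDiff ω V‖ ≤ V.card := by
  refine (norm_sum_le _ _).trans ((Finset.sum_le_card_nsmul _ _ 1 fun x hx => ?_).trans_eq
    (by simp))
  rw [norm_div, norm_prod]
  exact div_le_one_of_le₀ ((hω x hx).trans_eq (by simp_rw [dist_eq_norm])) (by positivity)

theorem norm_finsetDivDiff_eq_inv_prod_sdiff {K : Type*} [NormedField K] [DecidableEq K]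
    {ω : K → K} {V T : Finset K} {b : K} (hbV : b ∈ V) (hTV : T ⊆ V.erase b)
    (hω : ∀ x ∈ V, x ≠ b → ω x = 0) (hωb : ‖ω b‖ = ∏ t ∈ T, dist b t) :
    ‖finsetDivDiff ω V‖ = (∏ y ∈ V.erase b \ T, dist b y)⁻¹ := by
  have hT : ∏ t ∈ T, dist b t ≠ 0 := (Finset.prod_pos fun t ht =>
    dist_pos.2 (Finset.ne_of_mem_erase (hTV ht)).symm).ne'
  rw [finsetDivDiff_eq_of_eq_zero hbV hω, norm_div, norm_prod, hωb, ← Finset.prod_sdiff hTV]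
  simp_rw [← dist_eq_norm]
  rw [div_mul_cancel_right₀ hT]

theorem Fin.image_succ_eq_erase {α : Type*} [DecidableEq α] {n : ℕ} {z : Fin (n + 1) → α}
    (hz : Function.Injective z) :
    Finset.univ.image (fun i : Fin n => z i.succ) = (Finset.univ.image z).erase (z 0) := by
  ext x
  simp only [Finset.mem_image, Finset.mem_univ, true_and, Finset.mem_erase]
  constructor
  · rintro ⟨i, rfl⟩
    exact ⟨hz.ne (Fin.succ_ne_zero i), i.succ, rfl⟩
  · rintro ⟨hx, i, rfl⟩
    obtain ⟨j, rfl⟩ := Fin.exists_succ_eq.2 (ne_of_apply_ne z hx)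
    exact ⟨j, rfl⟩

theorem Fin.image_castSucc_eq_erase {α : Type*} [DecidableEq α] {n : ℕ} {z : Fin (n + 1) → α}
    (hz : Function.Injective z) :
    Finset.univ.image (fun i : Fin n => z i.castSucc) =
      (Finset.univ.image z).erase (z (Fin.last n)) := by
  ext x
  simp only [Finset.mem_image, Finset.mem_univ, true_and, Finset.mem_erase]
  constructor
  · rintro ⟨i, rfl⟩
    exact ⟨hz.ne (Fin.castSucc_ne_last i), i.castSucc, rfl⟩
  · rintro ⟨hx, i, rfl⟩
    obtain ⟨j, rfl⟩ := Fin.exists_castSucc_eq.2 (ne_of_apply_ne z hx)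
    exact ⟨j, rfl⟩

theorem divDiff_eq_finsetDivDiff :
    ∀ {k : ℕ} (ω : ℂ → ℂ) {z : Fin (k + 1) → ℂ}, Function.Injective z →
      divDiff k ω z = finsetDivDiff ω (Finset.univ.image z)
  | 0, ω, z, _ => by simp [divDiff, finsetDivDiff, Finset.univ_unique]
  | k + 1, ω, z, hz => by
    rw [divDiff, divDiff_eq_finsetDivDiff ω (z := fun i => z i.succ)
        (hz.comp (Fin.succ_injective _)),
      divDiff_eq_finsetDivDiff ω (z := fun i => z i.castSucc) (hz.comp (Fin.castSucc_injective _)),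
      Fin.image_succ_eq_erase hz, Fin.image_castSucc_eq_erase hz]
    exact finsetDivDiff_erase_sub_erase_div ω (Finset.mem_image_of_mem z (Finset.mem_univ _))
      (Finset.mem_image_of_mem z (Finset.mem_univ _)) (hz.ne (Fin.last_pos.ne))

theorem Finset.exists_injective_image_univ_eq {α : Type*} [DecidableEq α] (V : Finset α) {n : ℕ}
    (hV : V.card = n) : ∃ z : Fin n → α, Function.Injective z ∧ Finset.univ.image z = V := by
  subst hV
  exact ⟨fun i => V.equivFin.symm i, Subtype.val_injective.comp V.equivFin.symm.injective, by
    ext x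
    simp only [Finset.mem_image, Finset.mem_univ, true_and]
    exact ⟨fun ⟨i, hi⟩ => hi ▸ (V.equivFin.symm i).2, fun hx => ⟨V.equivFin ⟨x, hx⟩, by simp⟩⟩⟩

theorem Finset.prod_le_of_nonempty_of_le_of_le_one {ι : Type*} {s : Finset ι} {f : ι → ℝ} {r : ℝ}
    (hs : s.Nonempty) (h0 : ∀ i ∈ s, 0 ≤ f i) (hf : ∀ i ∈ s, f i ≤ r) (hr : r ≤ 1) :
    ∏ i ∈ s, f i ≤ r := by
  classical
  obtain ⟨i, hi⟩ := hs
  rw [← Finset.mul_prod_erase s f hi]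
  exact (mul_le_of_le_one_right (h0 i hi) (Finset.prod_le_one
    (fun j hj => h0 j (Finset.mem_of_mem_erase hj))
    fun j hj => (hf j (Finset.mem_of_mem_erase hj)).trans hr)).trans (hf i hi)

theorem Set.exists_finset_subset_card_eq_of_lt_encard {α : Type*} {s : Set α} {n : ℕ}
    (h : (n : ℕ∞) < s.encard) : ∃ U : Finset α, ↑U ⊆ s ∧ U.card = n + 1 := by
  obtain ⟨t, hts, ht⟩ := Set.exists_subset_encard_eq (Order.add_one_le_of_lt h)
  have htfin : t.Finite := Set.finite_of_encard_eq_coe (k := n + 1) (by exact_mod_cast ht)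
  refine ⟨htfin.toFinset, by simpa using hts, ?_⟩
  have := htfin.encard_eq_coe_toFinset_card
  rw [ht] at this
  exact_mod_cast this.symm

namespace DiscreteSet

variable {Λ : Set ℂ}

theorem finite_inter_closedBall (hΛ : DiscreteSet Λ) (c : ℂ) (R : ℝ) :
    (Λ ∩ closedBall c R).Finite := by
  by_contra hinf
  obtain ⟨x, -, hx⟩ := Set.Infinite.exists_accPt_of_subset_isCompact hinf
    (isCompact_closedBall c R) inter_subset_right
  exact hΛ x (hx.mono (Filter.principal_mono.2 inter_subset_left))

theorem eventually_inter_ball_subset (hΛ : DiscreteSet Λ) (l : ℂ) :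
    ∀ᶠ δ in 𝓝[>] (0 : ℝ), Λ ∩ ball l δ ⊆ {l} := by
  have hiso : ∀ᶠ y in 𝓝 l, y ≠ l → y ∉ Λ := by
    simpa [accPt_iff_frequently, Filter.not_frequently, not_and] using hΛ l
  obtain ⟨t, ht, hball⟩ := Metric.eventually_nhds_iff_ball.1 hiso
  filter_upwards [nhdsWithin_le_nhds (eventually_lt_nhds ht)] with δ hδ
  exact fun y ⟨hyΛ, hy⟩ => by_contra fun hyl => hball y (ball_subset_ball hδ.le hy) hyl hyΛ

theorem exists_pos_forall_inter_ball_subset (hΛ : DiscreteSet Λ) (R : ℝ) :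
    ∃ δ > 0, ∀ l ∈ Λ, ‖l‖ ≤ R → Λ ∩ ball l δ ⊆ {l} := by
  have hall := (Filter.eventually_all_finite (hΛ.finite_inter_closedBall 0 R)).2
    fun l _ => hΛ.eventually_inter_ball_subset l
  obtain ⟨δ, hδ, hδ0⟩ := (hall.and self_mem_nhdsWithin).exists
  exact ⟨δ, hδ0, fun l hl hlR => hδ l ⟨hl, by simpa using hlR⟩⟩

noncomputable def nearby (hΛ : DiscreteSet Λ) (b : ℂ) : Finset ℂ :=
  ((hΛ.finite_inter_closedBall b 1).sdiff (t := {b})).toFinset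

theorem mem_nearby (hΛ : DiscreteSet Λ) {b t : ℂ} :
    t ∈ hΛ.nearby b ↔ (t ∈ Λ ∧ dist t b ≤ 1) ∧ t ≠ b := by
  simp [nearby]

-- Putting `ω b := minDistProd hΛ k b` makes every term at `b` of a `k`-th divided difference on `Λ`
-- at most `1` in modulus.
noncomputable def minDistProd (hΛ : DiscreteSet Λ) (k : ℕ) (b : ℂ) : ℝ :=
  ((hΛ.nearby b).powerset.filter (·.card ≤ k)).inf' ⟨∅, by simp⟩ fun T => ∏ t ∈ T, dist b t

theorem minDistProd_pos (hΛ : DiscreteSet Λ) (k : ℕ) (b : ℂ) : 0 < hΛ.minDistProd k b := by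
  refine (Finset.lt_inf'_iff _).2 fun T hT => Finset.prod_pos fun t ht => ?_
  rw [Finset.mem_filter, Finset.mem_powerset] at hT
  exact dist_pos.2 ((hΛ.mem_nearby.1 (hT.1 ht)).2.symm)

theorem exists_minDistProd_eq (hΛ : DiscreteSet Λ) (k : ℕ) (b : ℂ) :
    ∃ T ⊆ hΛ.nearby b, T.card ≤ k ∧ hΛ.minDistProd k b = ∏ t ∈ T, dist b t := by
  obtain ⟨T, hT, hTeq⟩ := Finset.exists_mem_eq_inf'
    (⟨∅, by simp⟩ : ((hΛ.nearby b).powerset.filter (·.card ≤ k)).Nonempty)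
    fun T => ∏ t ∈ T, dist b t
  rw [Finset.mem_filter, Finset.mem_powerset] at hT
  exact ⟨T, hT.1, hT.2, hTeq⟩

theorem minDistProd_le_prod (hΛ : DiscreteSet Λ) {k : ℕ} {b : ℂ} {T : Finset ℂ}
    (hT : ∀ t ∈ T, t ∈ Λ ∧ t ≠ b) (hk : T.card ≤ k) :
    hΛ.minDistProd k b ≤ ∏ t ∈ T, dist b t := by
  classical
  have hmem : T.filter (· ∈ hΛ.nearby b) ∈ (hΛ.nearby b).powerset.filter (·.card ≤ k) :=
    Finset.mem_filter.2 ⟨Finset.mem_powerset.2 fun t ht => (Finset.mem_filter.1 ht).2,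
      (Finset.card_filter_le _ _).trans hk⟩
  refine (Finset.inf'_le _ hmem).trans (Finset.prod_le_prod_of_subset_of_one_le
    (Finset.filter_subset _ _) (fun _ _ => dist_nonneg) fun t ht htn => ?_)
  by_contra! hlt
  exact htn (Finset.mem_filter.2 ⟨ht, hΛ.mem_nearby.2
    ⟨⟨(hT t ht).1, by rw [dist_comm]; exact hlt.le⟩, (hT t ht).2⟩⟩)

theorem memX_of_norm_le_minDistProd (hΛ : DiscreteSet Λ) {p : ℂ → ℝ} (hp0 : ∀ z, 0 ≤ p z)
    {k : ℕ} {ω : ℂ → ℂ} (hω : ∀ x ∈ Λ, ‖ω x‖ ≤ hΛ.minDistProd k x) : MemX p Λ k ω := by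
  refine ⟨k + 1, by positivity, 1, one_pos, fun z hzΛ hz => ?_⟩
  set V := Finset.univ.image z
  have hV : V.card = k + 1 := by simp [V, Finset.card_image_of_injective _ hz]
  have hterm : ∀ x ∈ V, ‖ω x‖ ≤ ∏ y ∈ V.erase x, dist x y := by
    intro x hx
    obtain ⟨i, -, rfl⟩ := Finset.mem_image.1 hx
    refine (hω _ (hzΛ i)).trans
      (hΛ.minDistProd_le_prod (fun t ht => ⟨?_, Finset.ne_of_mem_erase ht⟩)
      (by rw [Finset.card_erase_of_mem hx, hV]; rfl))
    obtain ⟨j, -, rfl⟩ := Finset.mem_image.1 (Finset.mem_of_mem_erase ht)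
    exact hzΛ j
  have hexp : 1 ≤ Real.exp (1 * ∑ i, p (z i)) :=
    Real.one_le_exp_iff.2 (by simpa using Finset.sum_nonneg fun i _ => hp0 (z i))
  calc ‖divDiff k ω z‖ = ‖finsetDivDiff ω V‖ := by rw [divDiff_eq_finsetDivDiff ω hz]
    _ ≤ k + 1 := by exact_mod_cast hV ▸ norm_finsetDivDiff_le_card hterm
    _ ≤ (k + 1) * Real.exp (1 * ∑ i, p (z i)) := le_mul_of_one_le_right (by positivity) hexp

-- The nodes are `b`, a `k`-set realising `minDistProd`, and points of the crowded disk around `b`.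
theorem exists_finset_norm_finsetDivDiff_ge (hΛ : DiscreteSet Λ) {k : ℕ} {ω : ℂ → ℂ} {b : ℂ}
    (hb : b ∈ Λ) (hωb : ω b = hΛ.minDistProd k b)
    (hω : ∀ x ∈ Λ, x ≠ b → dist x b ≤ 1 → ω x = 0) {r : ℝ} (hr : r ≤ 1)
    (hcard : ((k + 1 : ℕ) : ℕ∞) < (Λ ∩ ball b r).encard) :
    ∃ V : Finset ℂ, V.card = k + 2 ∧ (∀ x ∈ V, x ∈ Λ ∧ dist x b ≤ 1) ∧
      1 ≤ r * ‖finsetDivDiff ω V‖ := by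
  classical
  obtain ⟨U, hU, hUcard⟩ := Set.exists_finset_subset_card_eq_of_lt_encard hcard
  obtain ⟨T, hT, hTk, hTeq⟩ := hΛ.exists_minDistProd_eq k b
  have hbT : b ∉ T := fun h => (hΛ.mem_nearby.1 (hT h)).2 rfl
  obtain ⟨V, hbTV, hVsub, hVcard⟩ := Finset.exists_subsuperset_card_eq
    (Finset.subset_union_left (s₂ := U)) (by rw [Finset.card_insert_of_notMem hbT]; omega)
    (hUcard ▸ Finset.card_le_card Finset.subset_union_right)
  have hmem : ∀ x ∈ V, x ∈ Λ ∧ dist x b ≤ 1 := by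
    intro x hx
    rcases Finset.mem_union.1 (hVsub hx) with hx | hx
    · rcases Finset.mem_insert.1 hx with rfl | hx
      · exact ⟨hb, by simp⟩
      · exact (hΛ.mem_nearby.1 (hT hx)).1
    · exact ⟨(hU hx).1, (mem_ball.1 (hU hx).2).le.trans hr⟩
  have hbV : b ∈ V := hbTV (Finset.mem_insert_self b T)
  have hTV : T ⊆ V.erase b := fun t ht =>
    Finset.mem_erase.2 ⟨fun h => hbT (h ▸ ht), hbTV (Finset.mem_insert_of_mem ht)⟩
  set F := V.erase b \ T
  have hF : F.Nonempty := Finset.sdiff_nonempty_of_card_lt_card (by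
    rw [Finset.card_erase_of_mem hbV, hVcard]; omega)
  have hFball : ∀ y ∈ F, 0 < dist b y ∧ dist b y ≤ r := by
    intro y hy
    obtain ⟨hyV, hyT⟩ := Finset.mem_sdiff.1 hy
    obtain ⟨hyb, hyV⟩ := Finset.mem_erase.1 hyV
    have hyU : y ∈ U := by simpa [hyb, hyT] using hVsub hyV
    exact ⟨dist_pos.2 hyb.symm, by rw [dist_comm]; exact (mem_ball.1 (hU hyU).2).le⟩
  have hnorm : ‖finsetDivDiff ω V‖ = (∏ y ∈ F, dist b y)⁻¹ :=
    norm_finsetDivDiff_eq_inv_prod_sdiff hbV hTV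
      (fun x hx hxb => hω x (hmem x hx).1 hxb (hmem x hx).2)
      (by rw [hωb, Complex.norm_real, Real.norm_of_nonneg (hΛ.minDistProd_pos k b).le, hTeq])
  refine ⟨V, hVcard, hmem, ?_⟩
  rw [hnorm, ← div_eq_mul_inv, one_le_div (Finset.prod_pos fun y hy => (hFball y hy).1)]
  exact Finset.prod_le_of_nonempty_of_le_of_le_one hF (fun y hy => (hFball y hy).1.le)
    (fun y hy => (hFball y hy).2) hr

theorem exists_norm_divDiff_ge (hΛ : DiscreteSet Λ) {k : ℕ} {ω : ℂ → ℂ} {b : ℂ}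
    (hb : b ∈ Λ) (hωb : ω b = hΛ.minDistProd k b)
    (hω : ∀ x ∈ Λ, x ≠ b → dist x b ≤ 1 → ω x = 0) {r : ℝ} (hr : r ≤ 1)
    (hcard : ((k + 1 : ℕ) : ℕ∞) < (Λ ∩ ball b r).encard) :
    ∃ z : Fin (k + 2) → ℂ, Function.Injective z ∧ (∀ i, z i ∈ Λ ∧ dist (z i) b ≤ 1) ∧
      1 ≤ r * ‖divDiff (k + 1) ω z‖ := by
  classical
  obtain ⟨V, hVcard, hmem, hlarge⟩ :=
    hΛ.exists_finset_norm_finsetDivDiff_ge hb hωb hω hr hcard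
  obtain ⟨z, hz, hzV⟩ := V.exists_injective_image_univ_eq hVcard
  refine ⟨z, hz, fun i => hmem _ (hzV ▸ Finset.mem_image_of_mem z (Finset.mem_univ i)), ?_⟩
  rwa [divDiff_eq_finsetDivDiff ω hz, hzV]

end DiscreteSet

def HasCrowdedDisks (p : ℂ → ℝ) (Λ : Set ℂ) (n : ℕ) : Prop :=
  ∀ ε > (0 : ℝ), ∀ C > (0 : ℝ), ∃ l ∈ Λ,
    (n : ℕ∞) < (Λ ∩ ball l (ε * Real.exp (-C * p l))).encard

section CrowdedDisks

variable {p : ℂ → ℝ} {Λ : Set ℂ} {n : ℕ}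

theorem HasCrowdedDisks.exists_far (h : HasCrowdedDisks p Λ n) (hp0 : ∀ z, 0 ≤ p z)
    (hΛ : DiscreteSet Λ) (hn : 1 ≤ n) {ε₀ C : ℝ} (hε₀ : 0 < ε₀) (hC : 0 < C) (R : ℝ) :
    ∃ l ∈ Λ, R < ‖l‖ ∧ ∃ r ≤ ε₀ * Real.exp (-C * p l), (n : ℕ∞) < (Λ ∩ ball l r).encard := by
  obtain ⟨δ, hδ, hsep⟩ := hΛ.exists_pos_forall_inter_ball_subset R
  obtain ⟨l, hl, hcard⟩ := h (min ε₀ δ) (lt_min hε₀ hδ) C hC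
  have hexp : Real.exp (-C * p l) ≤ 1 := Real.exp_le_one_iff.2 (by nlinarith [hp0 l])
  refine ⟨l, hl, ?_, _, mul_le_mul_of_nonneg_right (min_le_left _ _) (Real.exp_pos _).le, hcard⟩
  by_contra! hlR
  have hrδ : min ε₀ δ * Real.exp (-C * p l) ≤ δ :=
    (mul_le_of_le_one_right (lt_min hε₀ hδ).le hexp).trans (min_le_right _ _)
  have hle : (Λ ∩ ball l (min ε₀ δ * Real.exp (-C * p l))).encard ≤ 1 :=
    (encard_le_encard ((inter_subset_inter_right _ (ball_subset_ball hrδ)).trans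
      (hsep l hl hlR))).trans_eq (encard_singleton l)
  exact absurd (hcard.trans_le hle) (not_lt.2 (by exact_mod_cast hn))

theorem HasCrowdedDisks.exists_far_small (h : HasCrowdedDisks p Λ n) (hp0 : ∀ z, 0 ≤ p z)
    (hΛ : DiscreteSet Λ) (hn : 1 ≤ n) {c a : ℝ} (hc : 0 ≤ c) (ha : 0 ≤ a) (R : ℝ) :
    ∃ b, R < ‖b‖ ∧ b ∈ Λ ∧ ∃ r ≤ 1, r * Real.exp (c * p b + a) < 1 ∧
      (n : ℕ∞) < (Λ ∩ ball b r).encard := by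
  obtain ⟨b, hb, hbR, r, hr, hcard⟩ :=
    h.exists_far hp0 hΛ hn (half_pos (Real.exp_pos (-a))) (by positivity : 0 < c + 1) R
  have hsmall : r * Real.exp (c * p b + a) < 1 :=
    calc r * Real.exp (c * p b + a)
        ≤ Real.exp (-a) / 2 * Real.exp (-(c + 1) * p b) * Real.exp (c * p b + a) :=
          mul_le_mul_of_nonneg_right hr (Real.exp_pos _).le
      _ = Real.exp (-a + -(c + 1) * p b + (c * p b + a)) / 2 := by
          simp only [Real.exp_add]; ring
      _ = Real.exp (-p b) / 2 := by ring_nf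
      _ < 1 := by linarith [Real.exp_le_one_iff.2 (neg_nonpos.2 (hp0 b))]
  have hexp : 1 ≤ Real.exp (c * p b + a) := Real.one_le_exp_iff.2 (by nlinarith [hp0 b])
  exact ⟨b, hbR, hb, r, by nlinarith, hsmall, hcard⟩

end CrowdedDisks

theorem exists_seq_pairwise_one_lt_dist {E : Type*} [SeminormedAddCommGroup E] {Q : ℕ → E → Prop}
    (hQ : ∀ n R, ∃ b, R < ‖b‖ ∧ Q n b) :
    ∃ b : ℕ → E, (∀ n, Q n (b n)) ∧ Pairwise fun m n => 1 < dist (b m) (b n) := by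
  choose g hgR hgQ using hQ
  let b : ℕ → E := fun n => Nat.rec (g 0 0) (fun n x => g (n + 1) (‖x‖ + 1)) n
  have hstep : ∀ n, ‖b n‖ + 1 < ‖b (n + 1)‖ := fun n => hgR (n + 1) _
  have hmono : Monotone fun n => ‖b n‖ :=
    monotone_nat_of_le_succ fun n => by linarith [hstep n]
  have hgap : ∀ m n, m < n → 1 < dist (b m) (b n) := fun m n hmn =>
    calc 1 < ‖b n‖ - ‖b m‖ := by linarith [hstep m, hmono (Nat.succ_le_of_lt hmn)]
      _ ≤ dist (b m) (b n) := by rw [dist_comm, dist_eq_norm]; exact norm_sub_norm_le _ _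
  refine ⟨b, fun n => ?_, fun m n hmn => ?_⟩
  · cases n with
    | zero => exact hgQ 0 0
    | succ n => exact hgQ (n + 1) _
  · rcases hmn.lt_or_gt with h | h
    · exact hgap m n h
    · rw [dist_comm]; exact hgap n m h

theorem sum_le_card_mul_of_dist_le_one {ι : Type*} [Fintype ι] {p : ℂ → ℝ} {D E : ℝ}
    (hpDE : ∀ z w : ℂ, ‖z - w‖ ≤ 1 → p z ≤ D * p w + E) {z : ι → ℂ} {b : ℂ}
    (hz : ∀ i, dist (z i) b ≤ 1) : ∑ i, p (z i) ≤ Fintype.card ι * (D * p b + E) := by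
  simpa [mul_add] using Finset.sum_le_card_nsmul Finset.univ _ _ fun i _ =>
    hpDE (z i) b ((dist_eq_norm _ _).symm.trans_le (hz i))

theorem mul_exp_le_exp_mul_one_add {A B S T : ℝ} {n : ℕ} (hA : A ≤ n) (hB : B ≤ n)
    (hS : 0 ≤ S) (hST : S ≤ T) : A * Real.exp (B * S) ≤ Real.exp (n * (1 + T)) :=
  calc A * Real.exp (B * S) ≤ n * Real.exp (n * T) :=
        mul_le_mul hA (Real.exp_le_exp.2 (mul_le_mul hB hST hS n.cast_nonneg)) (by positivity)
          n.cast_nonneg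
    _ ≤ Real.exp n * Real.exp (n * T) := by
        gcongr; linarith [Real.add_one_le_exp (n : ℝ)]
    _ = Real.exp (n * (1 + T)) := by rw [← Real.exp_add]; ring_nf

theorem stmt7 (p : ℂ → ℝ) (hp : IsWeight p) (Λ : Set ℂ) (hΛd : DiscreteSet Λ) (k : ℕ)
    (h : ∀ ε > (0:ℝ), ∀ C > (0:ℝ), ∃ l ∈ Λ,
      ((k + 1 : ℕ) : ℕ∞) < (Λ ∩ ball l (ε * Real.exp (-C * p l))).encard) :
    ∃ ω : ℂ → ℂ, MemX p Λ k ω ∧ ¬ MemX p Λ (k+1) ω := by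
  obtain ⟨hp0, -, D, hD, E, hE, hpDE⟩ := hp
  obtain ⟨b, hb, hsep⟩ := exists_seq_pairwise_one_lt_dist fun (n : ℕ) R =>
    HasCrowdedDisks.exists_far_small h hp0 hΛd (Nat.le_add_left 1 k)
      (c := n * ((k + 2) * D)) (a := n * (1 + (k + 2) * E)) (by positivity) (by positivity) R
  set ω : ℂ → ℂ := (range b).indicator fun x => (hΛd.minDistProd k x : ℂ)
  have hωle : ∀ x ∈ Λ, ‖ω x‖ ≤ hΛd.minDistProd k x := fun x _ =>
    (norm_indicator_le_norm_self _ _).trans_eq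
      (by rw [Complex.norm_real, Real.norm_of_nonneg (hΛd.minDistProd_pos k x).le])
  refine ⟨ω, hΛd.memX_of_norm_le_minDistProd hp0 hωle, ?_⟩
  rintro ⟨A, -, B, -, hAB⟩
  obtain ⟨n, hAn, hBn⟩ : ∃ n : ℕ, A ≤ n ∧ B ≤ n := ⟨⌈max A B⌉₊,
    (le_max_left A B).trans (Nat.le_ceil _), (le_max_right A B).trans (Nat.le_ceil _)⟩
  obtain ⟨hbΛ, r, hr1, hrexp, hcard⟩ := hb n
  have hωb : ω (b n) = hΛd.minDistProd k (b n) := indicator_of_mem (mem_range_self n) _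
  have hω0 : ∀ x ∈ Λ, x ≠ b n → dist x (b n) ≤ 1 → ω x = 0 := by
    rintro x - hxb hxd
    refine indicator_of_notMem ?_ _
    rintro ⟨m, rfl⟩
    exact (hsep (ne_of_apply_ne b hxb)).not_ge hxd
  obtain ⟨z, hz, hzb, hlarge⟩ := hΛd.exists_norm_divDiff_ge hbΛ hωb hω0 hr1 hcard
  have hr0 : 0 ≤ r := (pos_of_mul_pos_left (zero_lt_one.trans_le hlarge) (norm_nonneg _)).le
  have hS := sum_le_card_mul_of_dist_le_one hpDE fun i => (hzb i).2
  rw [Fintype.card_fin] at hS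
  refine lt_irrefl (1 : ℝ) ?_
  calc 1 ≤ r * ‖divDiff (k + 1) ω z‖ := hlarge
    _ ≤ r * Real.exp (n * (1 + ((k + 2 : ℕ) : ℝ) * (D * p (b n) + E))) := by
        refine mul_le_mul_of_nonneg_left ((hAB z (fun i => (hzb i).1) hz).trans ?_) hr0
        exact mul_exp_le_exp_mul_one_add hAn hBn (Finset.sum_nonneg fun i _ => hp0 (z i)) hS
    _ < 1 := by convert hrexp using 3; push_cast; ring
end

section
/- Let Λ₁,…,Λ_n be weakly separated sequences in ℂ with respect to the weight p. Then there exist positive constants a, b, B₁, B₂, ε, a subsequence 𝓛 ⊂ Λ₁∪⋯∪Λ_n, and disks D_λ = D(λ, r_λ) for λ ∈ 𝓛, such that: (i) Λ₁∪⋯∪Λ_n ⊂ ∪_{λ∈𝓛} D_λ; (ii) aε e^{−B₁p(λ)} ≤ r_λ ≤ bε e^{−B₂p(λ)} for all λ ∈ 𝓛; (iii) dist(D_λ, D_{λ'}) ≥ aε e^{−B₁p(λ)} for distinct λ, λ' ∈ 𝓛; (iv) each D_λ contains at most one point of each Λ_j. -/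
/-!
Weak separation together with `p(z) ≤ D₀ p(w) + E₀` for `|z - w| ≤ 1` gives `s, B > 0` such that
a disk `D(λ, s e^{-B p(λ)})` contains at most one point of each `Λ_j`, hence at most `n` points of
`Λ₁ ∪ ⋯ ∪ Λ_n`. By pigeonhole one of the `n` annuli `8^k R / 8^n ≤ |z - λ| < 8^(k+1) R / 8^n`
(`R = s e^{-B p(λ)}`) is empty; twice its inner radius is a radius `r_λ ≥ 2R / 8^n` such that all
points within `4 r_λ` of `λ` already lie within `r_λ / 2`. Keeping, among overlapping disks, the
one of largest radius then gives disks that still cover and are `4 r`-separated.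
-/

open Complex Metric Set

theorem encard_iUnion_le_card_of_subsingleton {α ι : Type*} [Fintype ι] {s : ι → Set α}
    (hs : ∀ i, (s i).Subsingleton) : (⋃ i, s i).encard ≤ Fintype.card ι :=
  calc (⋃ i, s i).encard ≤ ∑ i, (s i).encard := encard_iUnion_le_of_fintype s
    _ ≤ ∑ _i : ι, 1 := Finset.sum_le_sum fun i _ => encard_le_one_iff_subsingleton.mpr (hs i)
    _ = Fintype.card ι := by simp

section PseudoMetric

variable {α : Type*} [PseudoMetricSpace α]

theorem TotallyBounded.finite_of_pairwise_le_dist {s t : Set α} {η : ℝ} (ht : TotallyBounded t)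
    (hst : s ⊆ t) (hη : 0 < η) (hs : s.Pairwise fun x y => η ≤ dist x y) : s.Finite := by
  obtain ⟨c, hc, hcov⟩ := Metric.totallyBounded_iff.mp ht (η / 2) (half_pos hη)
  refine (hc.biUnion fun y _ => (?_ : (s ∩ ball y (η / 2)).Subsingleton).finite).subset
    fun x hx => ?_
  · intro a ha b hb
    by_contra hab
    have := dist_triangle_right a b y
    linarith [hs ha.1 hb.1 hab, mem_ball.mp ha.2, mem_ball.mp hb.2]
  · obtain ⟨y, hy, hxy⟩ := mem_iUnion₂.mp (hcov (hst hx))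
    exact mem_iUnion₂.mpr ⟨y, hy, hx, hxy⟩

theorem subsingleton_inter_ball_of_pairwise_add_le_dist {Λ : Set α} {δ : α → ℝ}
    (hΛ : Λ.Pairwise fun l m => δ l + δ m ≤ dist l m) {w : α} {ρ : ℝ}
    (hρ : ∀ z ∈ ball w ρ, ρ ≤ δ z) : (Λ ∩ ball w ρ).Subsingleton := by
  intro a ha b hb
  by_contra hab
  have := dist_triangle_right a b w
  linarith [hΛ ha.1 hb.1 hab, hρ a ha.2, hρ b hb.2, mem_ball.mp ha.2, mem_ball.mp hb.2]

theorem finite_inter_closedBall_of_pairwise_add_le_dist [ProperSpace α] {Λ : Set α}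
    {δ : α → ℝ} (hΛ : Λ.Pairwise fun l m => δ l + δ m ≤ dist l m) {x : α} {R η : ℝ}
    (hη : 0 < η) (hδ : ∀ z ∈ closedBall x R, η ≤ δ z) : (Λ ∩ closedBall x R).Finite :=
  (isCompact_closedBall x R).totallyBounded.finite_of_pairwise_le_dist inter_subset_right hη
    fun a ha b hb hab => by linarith [hΛ ha.1 hb.1 hab, hδ a ha.2, hδ b hb.2]

theorem exists_annulus_disjoint {S : Set α} {l : α} (hl : l ∈ S) {n : ℕ} {R : ℝ}
    (hS : (S ∩ ball l R).encard ≤ n) {t : ℕ → ℝ} (ht : Monotone t) (ht0 : 0 < t 0)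
    (htn : t n ≤ R) : ∃ k < n, ∀ x ∈ S, ¬ (t k ≤ dist x l ∧ dist x l < t (k + 1)) := by
  by_contra! h
  have : Nonempty α := ⟨l⟩
  choose! g hgS hg using h
  have hgmem : ∀ k ∈ Finset.range n, g k ∈ S ∩ ball l R ∧ t k ≤ dist (g k) l := fun k hk =>
    have hk : k < n := Finset.mem_range.mp hk
    ⟨⟨hgS k hk, (hg k hk).2.trans_le ((ht hk).trans htn)⟩, (hg k hk).1⟩
  have hinj : InjOn g (Finset.range n : Set ℕ) := by
    refine InjOn.of_comp (g := (dist · l)) (StrictMonoOn.injOn ?_)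
    intro i hi j hj hij
    exact ((hg i (by simpa using hi)).2.trans_le (ht hij)).trans_le (hgmem j hj).2
  have hl' : l ∉ g '' (Finset.range n : Set ℕ) := by
    rintro ⟨k, hk, rfl⟩
    linarith [(hgmem k hk).2, ht (Nat.zero_le k), dist_self (g k)]
  have hsub : insert l (g '' (Finset.range n : Set ℕ)) ⊆ S ∩ ball l R := by
    rintro _ (rfl | ⟨k, hk, rfl⟩)
    · exact ⟨hl, mem_ball_self (ht0.trans_le ((ht (Nat.zero_le n)).trans htn))⟩
    · exact (hgmem k hk).1
  have := (encard_le_encard hsub).trans hS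
  rw [encard_insert_of_notMem hl', hinj.encard_image, encard_coe_eq_coe_finsetCard,
    Finset.card_range] at this
  exact absurd this (by norm_cast; omega)

theorem exists_moat_radius {S : Set α} {l : α} (hl : l ∈ S) {n : ℕ} {R : ℝ} (hR : 0 < R)
    (hS : (S ∩ ball l R).encard ≤ n) :
    ∃ r, 2 * R / 8 ^ n ≤ r ∧ r ≤ R / 4 ∧ ∀ x ∈ S, dist x l < 4 * r → dist x l < r / 2 := by
  set t : ℕ → ℝ := fun k => 8 ^ k * (R / 8 ^ n)
  have ht : Monotone t := fun i j hij =>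
    mul_le_mul_of_nonneg_right (pow_le_pow_right₀ (by norm_num) hij) (by positivity)
  obtain ⟨k, hk, hann⟩ := exists_annulus_disjoint hl hS ht (by positivity)
    (by simp [t, mul_div_cancel₀ R (pow_ne_zero n (by norm_num : (8:ℝ) ≠ 0))])
  have hsucc : t (k + 1) = 8 * t k := by simp only [t, pow_succ]; ring
  refine ⟨2 * t k, ?_, ?_, fun x hx hlt => ?_⟩
  · have := ht (Nat.zero_le k)
    simp only [t, pow_zero, one_mul] at this ⊢
    rw [mul_div_assoc]
    linarith
  · have := ht (show k + 1 ≤ n from hk)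
    simp only [t, mul_div_cancel₀ R (pow_ne_zero n (by norm_num : (8:ℝ) ≠ 0))] at this hsucc
    linarith
  · by_contra hge
    exact hann x hx ⟨by linarith, by linarith⟩

theorem exists_separated_subcover_of_moat {S : Set α} {r : α → ℝ} (hr : ∀ l ∈ S, 0 < r l)
    (hmoat : ∀ l ∈ S, ∀ x ∈ S, dist x l < 4 * r l → dist x l < r l / 2)
    (hfin : ∀ x ∈ S, {μ ∈ S | dist x μ < r μ}.Finite) :
    ∃ L ⊆ S, S ⊆ ⋃ l ∈ L, ball l (r l) ∧ ∀ l ∈ L, ∀ m ∈ L, l ≠ m → 4 * r l ≤ dist l m := by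
  -- Among overlapping balls keep the one with the largest radius; ties are broken by an
  -- arbitrary injection into a linear order.
  let key : α → Lex (ℝ × Cardinal) := fun l => toLex (r l, embeddingToCardinal l)
  have hkey : Function.Injective key := fun a b h =>
    embeddingToCardinal.injective (congrArg Prod.snd (toLex.injective h))
  have hkey_r : ∀ a b, key a ≤ key b → r a ≤ r b := fun a b h =>
    (Prod.Lex.toLex_le_toLex.mp h).elim le_of_lt fun h => h.1.le
  refine ⟨{l ∈ S | ∀ m ∈ S, dist l m < max (r l) (r m) → key m ≤ key l}, fun l hl => hl.1,
    fun x hx => ?_, fun l hl m hm hne => ?_⟩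
  · obtain ⟨l, ⟨hlS, hxl⟩, hmax⟩ :=
      exists_max_image _ key (hfin x hx) ⟨x, hx, by simpa using hr x hx⟩
    refine mem_biUnion ⟨hlS, fun m hm hlm => ?_⟩ (mem_ball.mpr hxl)
    by_contra! hlt
    have hrm : r l ≤ r m := hkey_r _ _ hlt.le
    have hlm' : dist l m < r m / 2 :=
      hmoat m hm l hlS <| by
        linarith [hlm.trans_eq (max_eq_right hrm), dist_nonneg (x := l) (y := m)]
    have hxl' : dist x l < r l / 2 := hmoat l hlS x hx (by linarith [hr l hlS])
    exact hlt.not_ge (hmax m ⟨hm, by linarith [dist_triangle x l m]⟩)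
  · have hmax : max (r l) (r m) ≤ dist l m := by
      by_contra! h
      exact hne (hkey (le_antisymm (hm.2 l hl.1 (by rwa [dist_comm, max_comm]))
        (hl.2 m hm.1 h)))
    by_contra! h
    have := hmoat l hl.1 m hm.1 (by rwa [dist_comm])
    linarith [le_max_left (r l) (r m), dist_comm l m, hr l hl.1]

theorem exists_separated_cover_of_subsingleton_inter_ball {ι : Type*} [Fintype ι]
    {Λs : ι → Set α} {ρ : α → ℝ} (hρ : ∀ l ∈ ⋃ j, Λs j, 0 < ρ l)
    (hsub : ∀ j, ∀ l ∈ ⋃ j, Λs j, (Λs j ∩ ball l (ρ l)).Subsingleton)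
    (hfin : ∀ x ∈ ⋃ j, Λs j, {μ ∈ ⋃ j, Λs j | dist x μ < ρ μ}.Finite) :
    ∃ L ⊆ ⋃ j, Λs j, ∃ r : α → ℝ, ((⋃ j, Λs j) ⊆ ⋃ l ∈ L, ball l (r l)) ∧
      (∀ l ∈ L, 2 * ρ l / 8 ^ Fintype.card ι ≤ r l ∧ r l ≤ ρ l) ∧
      (∀ l ∈ L, ∀ m ∈ L, l ≠ m → ∀ x ∈ ball l (r l), ∀ y ∈ ball m (r m), 2 * r l ≤ dist x y) ∧
      ∀ j, ∀ l ∈ L, (Λs j ∩ ball l (r l)).Subsingleton := by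
  set S := ⋃ j, Λs j
  have hcard : ∀ l ∈ S, (S ∩ ball l (ρ l)).encard ≤ Fintype.card ι := fun l hl => by
    rw [iUnion_inter]
    exact encard_iUnion_le_card_of_subsingleton fun j => hsub j l hl
  choose! r hr_lo hr_hi hmoat using fun l hl => exists_moat_radius hl (hρ l hl) (hcard l hl)
  have hr_pos : ∀ l ∈ S, 0 < r l := fun l hl =>
    lt_of_lt_of_le (by have := hρ l hl; positivity) (hr_lo l hl)
  have hr_le : ∀ l ∈ S, r l ≤ ρ l := fun l hl => by linarith [hr_hi l hl, hρ l hl]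
  obtain ⟨L, hLS, hcov, hsep⟩ := exists_separated_subcover_of_moat hr_pos hmoat fun x hx =>
    (hfin x hx).subset fun μ hμ => ⟨hμ.1, hμ.2.trans_le (hr_le μ hμ.1)⟩
  refine ⟨L, hLS, r, hcov, fun l hl => ⟨hr_lo l (hLS hl), hr_le l (hLS hl)⟩,
    fun l hl m hm hne x hx y hy => ?_, fun j l hl =>
      (hsub j l (hLS hl)).anti (inter_subset_inter_right _ (ball_subset_ball (hr_le l (hLS hl))))⟩
  have hlm := hsep l hl m hm hne
  have hml := hsep m hm l hl hne.symm
  linarith [dist_triangle4 l x y m, mem_ball'.mp hx, mem_ball.mp hy, dist_comm l m]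

end PseudoMetric

theorem exists_pairwise_add_le_dist_of_weaklySeparated {ι : Type*} [Finite ι] {p : ℂ → ℝ}
    (hp : ∀ z, 0 ≤ p z) {Λs : ι → Set ℂ} (h : ∀ j, WeaklySeparated p (Λs j)) :
    ∃ ε > 0, ∃ C > 0, ∀ j, (Λs j).Pairwise fun l m =>
      ε * Real.exp (-C * p l) + ε * Real.exp (-C * p m) ≤ dist l m := by
  choose εj hεj Cj _ hdisj using h
  obtain ⟨ε, hε_le, hε⟩ := ((Filter.eventually_all.2 fun j =>
    (eventually_lt_nhds (hεj j)).filter_mono nhdsWithin_le_nhds).and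
      (self_mem_nhdsWithin : ∀ᶠ ε in nhdsWithin (0 : ℝ) (Ioi 0), 0 < ε)).exists
  obtain ⟨C, hC_ge, hC⟩ := ((Filter.eventually_all.2 fun j =>
    Filter.eventually_ge_atTop (Cj j)).and (Filter.eventually_gt_atTop 0)).exists
  refine ⟨ε, hε, C, hC, fun j l hl m hm hlm => ?_⟩
  have hmono : ∀ z, ε * Real.exp (-C * p z) ≤ εj j * Real.exp (-Cj j * p z) := fun z => by
    gcongr <;> linarith [hεj j, hε_le j, hp z, hC_ge j]
  exact (add_le_add (hmono l) (hmono m)).trans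
    ((disjoint_ball_ball_iff (mul_pos (hεj j) (Real.exp_pos _))
      (mul_pos (hεj j) (Real.exp_pos _))).mp (hdisj j l hl m hm hlm))

theorem IsWeight.exists_subsingleton_inter_ball_of_weaklySeparated {p : ℂ → ℝ} (hp : IsWeight p)
    {ι : Type*} [Finite ι] {Λs : ι → Set ℂ} (hsep : ∀ j, WeaklySeparated p (Λs j)) :
    ∃ s > 0, ∃ B > 0, (∀ j l, (Λs j ∩ ball l (s * Real.exp (-B * p l))).Subsingleton) ∧
      ∀ x, {μ ∈ ⋃ j, Λs j | dist x μ < s * Real.exp (-B * p μ)}.Finite := by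
  obtain ⟨hp0, -, D, hD, E, -, hDE⟩ := hp
  obtain ⟨ε, hε, C, hC, hsep₀⟩ := exists_pairwise_add_le_dist_of_weaklySeparated hp0 hsep
  set s := min (ε * Real.exp (-(C * E))) 1
  have hsu : ∀ w, s * Real.exp (-(C * D) * p w) ≤ 1 := fun w =>
    mul_le_one₀ (min_le_right _ _) (by positivity)
      (Real.exp_le_one_iff.mpr (by nlinarith [hp0 w, mul_pos hC hD]))
  have hharnack : ∀ z w, dist z w ≤ 1 →
      ε * Real.exp (-(C * E)) * Real.exp (-(C * D) * p w) ≤ ε * Real.exp (-C * p z) :=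
    fun z w hzw => by
      rw [mul_assoc, ← Real.exp_add]
      gcongr
      nlinarith [hDE z w (by rwa [← dist_eq])]
  refine ⟨s, by positivity, C * D, by positivity, fun j l => ?_, fun x => ?_⟩
  · refine subsingleton_inter_ball_of_pairwise_add_le_dist (hsep₀ j) fun z hz => ?_
    calc s * Real.exp (-(C * D) * p l)
        ≤ ε * Real.exp (-(C * E)) * Real.exp (-(C * D) * p l) := by
          gcongr
          exact min_le_left _ _
      _ ≤ _ := hharnack z l ((mem_ball.mp hz).le.trans (hsu l))
  · refine (finite_iUnion fun j => finite_inter_closedBall_of_pairwise_add_le_dist (hsep₀ j)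
      (by positivity) fun z hz => hharnack z x hz).subset ?_
    rintro μ ⟨hμ, hxμ⟩
    rw [← iUnion_inter]
    exact ⟨hμ, mem_closedBall'.mpr (hxμ.le.trans (hsu μ))⟩

theorem stmt9 (p : ℂ → ℝ) (hp : IsWeight p) (n : ℕ) (Λs : Fin n → Set ℂ)
    (hsep : ∀ j, WeaklySeparated p (Λs j)) :
    ∃ a > (0:ℝ), ∃ b > (0:ℝ), ∃ B₁ > (0:ℝ), ∃ B₂ > (0:ℝ), ∃ ε > (0:ℝ),
    ∃ L ⊆ ⋃ j, Λs j, ∃ r : ℂ → ℝ,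
      ((⋃ j, Λs j) ⊆ ⋃ l ∈ L, ball l (r l)) ∧
      (∀ l ∈ L, a * ε * Real.exp (-B₁ * p l) ≤ r l ∧ r l ≤ b * ε * Real.exp (-B₂ * p l)) ∧
      (∀ l ∈ L, ∀ m ∈ L, l ≠ m → ∀ x ∈ ball l (r l), ∀ y ∈ ball m (r m),
        a * ε * Real.exp (-B₁ * p l) ≤ dist x y) ∧
      (∀ j, ∀ l ∈ L, (Λs j ∩ ball l (r l)).encard ≤ 1) := by
  obtain ⟨s, hs, B, hB, hsub, hfin⟩ := hp.exists_subsingleton_inter_ball_of_weaklySeparated hsep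
  obtain ⟨L, hLS, r, hcov, hr, hsepL, hsubL⟩ :=
    exists_separated_cover_of_subsingleton_inter_ball (ρ := fun l => s * Real.exp (-B * p l))
      (fun l _ => by positivity) (fun j l _ => hsub j l) (fun x _ => hfin x)
  have ha : ∀ l, 2 * s / 8 ^ n * 1 * Real.exp (-B * p l) =
      2 * (s * Real.exp (-B * p l)) / 8 ^ Fintype.card (Fin n) := fun l => by
    rw [Fintype.card_fin]
    ring
  refine ⟨2 * s / 8 ^ n, by positivity, s, hs, B, hB, B, hB, 1, one_pos, L, hLS, r, hcov,
    fun l hl => ?_, fun l hl m hm hne x hx y hy => ?_,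
    fun j l hl => encard_le_one_iff_subsingleton.mpr (hsubL j l hl)⟩
  · rw [ha, mul_one]
    exact hr l hl
  · have : 0 < 2 * (s * Real.exp (-B * p l)) / 8 ^ Fintype.card (Fin n) := by positivity
    rw [ha]
    linarith [(hr l hl).1, hsepL l hl m hm hne x hx y hy]
end

section
/- If Γ is an A_p-interpolating sequence, then there exists a constant C>0 such that the sum ∑_{γ ∈ Γ} e^{−Cp(γ)} converges. -/
open Complex Metric Set

/-!
Test the uniform interpolation bounds on the data `1` at `l` and `0` elsewhere: the interpolating
function vanishes at `m ≠ l`, equals `1` at `l` and is at most `A e^{B p}` on the unit disc around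
`m`, so the Schwarz lemma separates `l` from `m` by `≳ e^{-C p(m)}`. Hence the discs
`D(γ, ε e^{-C p(γ)})` are disjoint. Each has mass `≳ e^{-C' p(γ)}` for the finite measure
`(1 + |z|²)⁻² dA`, because `p(z) ≥ K log(1 + |z|²)` and `p` is comparable on the disc to `p(γ)`;
summing over `Γ` gives the claim.
-/

open MeasureTheory

lemma summable_of_ofReal_le_measure {ι α : Type*} [MeasurableSpace α] (μ : Measure α)
    [IsFiniteMeasure μ] {s : ι → Set α} (hs : ∀ i, MeasurableSet (s i))
    (hd : Pairwise (Function.onFun Disjoint s)) {f : ι → ℝ} (hf0 : ∀ i, 0 ≤ f i)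
    (hf : ∀ i, ENNReal.ofReal (f i) ≤ μ (s i)) : Summable f := by
  have hfin : ∑' i, ENNReal.ofReal (f i) ≠ ⊤ :=
    ((ENNReal.tsum_le_tsum hf).trans (tsum_meas_le_meas_iUnion_of_disjoint μ hs hd)).trans_lt
      (measure_lt_top μ _) |>.ne
  exact (ENNReal.summable_toReal hfin).congr fun i => ENNReal.toReal_ofReal (hf0 i)

lemma Complex.min_one_inv_le_dist_of_mapsTo_ball {f : ℂ → ℂ} {l m : ℂ} {M : ℝ}
    (hf : DifferentiableOn ℂ f (ball m 1)) (hM : MapsTo f (ball m 1) (closedBall 0 M))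
    (hm : f m = 0) (hl : f l = 1) : min 1 M⁻¹ ≤ dist l m := by
  by_cases hlm : dist l m < 1
  · have h := Complex.dist_le_div_mul_dist_of_mapsTo_ball hf (hm ▸ hM) (mem_ball.2 hlm)
    rw [hl, hm, dist_zero_right, norm_one, div_one] at h
    have hM0 : 0 < M := pos_of_mul_pos_left (one_pos.trans_le h) dist_nonneg
    exact (min_le_right _ _).trans ((inv_le_iff_one_le_mul₀' hM0).2 h)
  · exact (min_le_left _ _).trans (not_lt.1 hlm)

/-- The density `(1 + |z|²)⁻²`, written in the form of `integrable_rpow_neg_one_add_norm_sq`. -/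
noncomputable def bracketMeasure : Measure ℂ :=
  volume.withDensity fun z => ENNReal.ofReal ((1 + ‖z‖ ^ 2) ^ (-(4 : ℝ) / 2))

instance : IsFiniteMeasure bracketMeasure :=
  isFiniteMeasure_withDensity_ofReal
    (integrable_rpow_neg_one_add_norm_sq (by rw [Complex.finrank_real_complex]; norm_num)).2

section
variable {p : ℂ → ℝ} {Γ : Set ℂ} {K D E : ℝ}

lemma UnifInterp.exists_mul_exp_le_dist (hU : UnifInterp p Γ) (hp0 : ∀ z, 0 ≤ p z)
    (hD : 0 < D) (hDE : ∀ z w : ℂ, ‖z - w‖ ≤ 1 → p z ≤ D * p w + E) :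
    ∃ δ > 0, ∃ C > 0, ∀ l ∈ Γ, ∀ m ∈ Γ, l ≠ m → δ * Real.exp (-C * p m) ≤ dist l m := by
  classical
  obtain ⟨A, hA, B, hB, hinterp⟩ := hU 1 one_pos 1 one_pos
  refine ⟨min 1 (A * Real.exp (B * E))⁻¹, by positivity, B * D, by positivity, ?_⟩
  intro l hl m hm hlm
  have hdata : ∀ z ∈ Γ, ‖Pi.single (M := fun _ => ℂ) l 1 z‖ ≤ 1 * Real.exp (1 * p z) := by
    intro z _
    rw [one_mul, one_mul]
    refine le_trans ?_ (Real.one_le_exp (hp0 z))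
    rcases eq_or_ne z l with rfl | hz <;> simp [*]
  obtain ⟨f, hf, hfA, hfΓ⟩ := hinterp _ hdata
  have hmaps : MapsTo f (ball m 1) (closedBall 0 (A * Real.exp (B * (D * p m + E)))) := by
    intro z hz
    rw [mem_closedBall_zero_iff]
    refine (hfA z).trans ?_
    gcongr
    exact hDE z m (by rw [← dist_eq_norm]; exact (mem_ball.1 hz).le)
  refine le_trans ?_ (Complex.min_one_inv_le_dist_of_mapsTo_ball hf.differentiableOn hmaps
    (by simp [hfΓ m hm, hlm.symm]) (by simp [hfΓ l hl]))
  rw [min_mul_of_nonneg _ _ (Real.exp_pos _).le]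
  refine min_le_min ?_ (le_of_eq ?_)
  · rw [one_mul, Real.exp_le_one_iff]
    have := hp0 m
    have : 0 < B * D := by positivity
    nlinarith
  · simp only [mul_add, Real.exp_add, mul_inv, neg_mul, Real.exp_neg]
    ring_nf

lemma weaklySeparated_of_mul_exp_le_dist {δ C : ℝ} (hδ : 0 < δ) (hC : 0 < C)
    (h : ∀ l ∈ Γ, ∀ m ∈ Γ, l ≠ m → δ * Real.exp (-C * p m) ≤ dist l m) :
    WeaklySeparated p Γ :=
  ⟨δ / 2, by positivity, C, hC, fun l hl m hm hlm => ball_disjoint_ball <| by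
    linarith [h l hl m hm hlm, h m hm l hl hlm.symm, dist_comm l m]⟩

lemma exp_neg_le_one_add_norm_sq_rpow (hK : 0 < K)
    (hKp : ∀ z : ℂ, K * Real.log (1 + ‖z‖ ^ 2) ≤ p z) (z : ℂ) :
    Real.exp (-(2 / K) * p z) ≤ (1 + ‖z‖ ^ 2) ^ (-(4 : ℝ) / 2) := by
  rw [Real.rpow_def_of_pos (by positivity), Real.exp_le_exp]
  have : Real.log (1 + ‖z‖ ^ 2) ≤ p z / K := by rw [le_div_iff₀ hK]; linarith [hKp z]
  have : -(2 / K) * p z = -2 * (p z / K) := by ring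
  linarith

lemma ofReal_le_bracketMeasure_ball (hK : 0 < K)
    (hKp : ∀ z : ℂ, K * Real.log (1 + ‖z‖ ^ 2) ≤ p z) (hDE : ∀ z w : ℂ, ‖z - w‖ ≤ 1 → p z ≤ D * p w + E) (γ : ℂ) {r : ℝ} (hr0 : 0 ≤ r)
    (hr1 : r ≤ 1) :
    ENNReal.ofReal (Real.pi * r ^ 2 * Real.exp (-(2 / K) * (D * p γ + E))) ≤
      bracketMeasure (ball γ r) := by
  set c := Real.exp (-(2 / K) * (D * p γ + E))
  rw [bracketMeasure, withDensity_apply _ measurableSet_ball]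
  calc ENNReal.ofReal (Real.pi * r ^ 2 * c) = ENNReal.ofReal c * volume (ball γ r) := by
        rw [Complex.volume_ball, ← ENNReal.ofReal_pow hr0, ← ENNReal.ofReal_coe_nnreal,
          NNReal.coe_real_pi, ← ENNReal.ofReal_mul (by positivity),
          ← ENNReal.ofReal_mul (by positivity)]
        ring_nf
    _ = ∫⁻ _ in ball γ r, ENNReal.ofReal c := (setLIntegral_const _ _).symm
    _ ≤ _ := by
        refine setLIntegral_mono' measurableSet_ball fun z hz => ENNReal.ofReal_le_ofReal ?_
        refine le_trans ?_ (exp_neg_le_one_add_norm_sq_rpow hK hKp z)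
        have := hDE z γ (by rw [← dist_eq_norm]; exact (mem_ball.1 hz).le.trans hr1)
        rw [Real.exp_le_exp, neg_mul, neg_mul, neg_le_neg_iff]
        gcongr

lemma WeaklySeparated.exists_summable_exp_neg (hΓ : WeaklySeparated p Γ) (hp0 : ∀ z, 0 ≤ p z)
    (hK : 0 < K) (hKp : ∀ z : ℂ, K * Real.log (1 + ‖z‖ ^ 2) ≤ p z) (hD : 0 < D)
    (hDE : ∀ z w : ℂ, ‖z - w‖ ≤ 1 → p z ≤ D * p w + E) :
    ∃ C > 0, Summable fun γ : Γ => Real.exp (-C * p γ) := by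
  obtain ⟨ε, hε, C, hC, hdisj⟩ := hΓ
  set ε' := min ε 1
  set r : ℂ → ℝ := fun γ => ε' * Real.exp (-C * p γ)
  have hr1 : ∀ γ, r γ ≤ 1 := fun γ =>
    mul_le_one₀ (min_le_right _ _) (Real.exp_pos _).le
      (Real.exp_le_one_iff.2 (by nlinarith [hp0 γ]))
  have hdisj' : Pairwise (Function.onFun Disjoint fun γ : Γ => ball (γ : ℂ) (r γ)) :=
    fun a b hab => (hdisj a a.2 b b.2 (Subtype.coe_ne_coe.2 hab)).mono
      (ball_subset_ball (mul_le_mul_of_nonneg_right (min_le_left _ _) (Real.exp_pos _).le))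
      (ball_subset_ball (mul_le_mul_of_nonneg_right (min_le_left _ _) (Real.exp_pos _).le))
  set c := Real.pi * ε' ^ 2 * Real.exp (-(2 / K) * E)
  have hc : 0 < c := by positivity
  refine ⟨2 * C + 2 * D / K, by positivity, (summable_mul_left_iff hc.ne').1 ?_⟩
  refine summable_of_ofReal_le_measure bracketMeasure (fun _ => measurableSet_ball) hdisj'
    (fun _ => by positivity) fun γ => le_of_eq_of_le ?_
      (ofReal_le_bracketMeasure_ball hK hKp hDE γ (by positivity) (hr1 γ))
  congr 1
  simp only [c, r, mul_pow, ← Real.exp_nat_mul, mul_assoc, ← Real.exp_add]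
  congr 3
  push_cast
  field_simp
  ring

end

theorem stmt12_general (p : ℂ → ℝ) (hp : IsWeight p) (Γ : Set ℂ) (hU : UnifInterp p Γ) :
    ∃ C > 0, Summable (fun γ : Γ => Real.exp (-C * p γ)) := by
  obtain ⟨hp0, ⟨K, hK, hKp⟩, ⟨D, hD, E, -, hDE⟩⟩ := hp
  obtain ⟨δ, hδ, C, hC, hsep⟩ := hU.exists_mul_exp_le_dist hp0 hD hDE
  exact (weaklySeparated_of_mul_exp_le_dist hδ hC hsep).exists_summable_exp_neg hp0 hK hKp hD hDE

theorem stmt12 (p : ℂ → ℝ) (hp : IsWeight p) (Γ : Set ℂ)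
    (hI : Interpolating p Γ) (hU : UnifInterp p Γ) :
    ∃ C > 0, Summable (fun γ : Γ => Real.exp (-C * p γ)) :=
  stmt12_general p hp Γ hU
end

section
/- If a sequence Γ ⊂ ℂ is weakly separated with respect to the weight p, then ∑_{γ ∈ Γ} e^{−Cp(γ)} < ∞ for C large enough. -/
open Complex Metric Set

/-! The disk `D(γ, ε e^{-C₀ p(γ)})` has area `π ε² e^{-2C₀ p(γ)}`, and on it the integrable
function `(1 + |z|²)^{-2}` is at least a constant times `e^{-2p(γ)/K}`, because
`1 + |γ|² ≤ e^{p(γ)/K}`. So `e^{-(2C₀ + 2/K) p(γ)}` is at most a fixed multiple of the integral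
of that function over the disk, and since the disks are disjoint, every partial sum of the series
is bounded by the integral over `ℂ`. -/

open MeasureTheory Function
open scoped Real

theorem summable_of_le_setIntegral_of_pairwise_disjoint {ι X : Type*} [MeasurableSpace X]
    {μ : Measure X} {a : ι → ℝ} {s : ι → Set X} {g : X → ℝ} (ha : 0 ≤ a)
    (hs : ∀ i, MeasurableSet (s i)) (hd : Pairwise (Disjoint on s)) (hg : Integrable g μ)
    (hg0 : 0 ≤ g) (hle : ∀ i, a i ≤ ∫ x in s i, g x ∂μ) : Summable a := by
  refine summable_of_sum_le ha (c := ∫ x, g x ∂μ) fun u => ?_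
  calc ∑ i ∈ u, a i ≤ ∑ i ∈ u, ∫ x in s i, g x ∂μ := Finset.sum_le_sum fun i _ => hle i
    _ = ∫ x in ⋃ i ∈ u, s i, g x ∂μ :=
      (integral_biUnion_finset u (fun i _ => hs i) (hd.set_pairwise _)
        fun _ _ => hg.integrableOn).symm
    _ ≤ ∫ x, g x ∂μ := setIntegral_le_integral hg (.of_forall hg0)

theorem Complex.measureReal_ball (a : ℂ) {r : ℝ} (hr : 0 ≤ r) :
    volume.real (ball a r) = π * r ^ 2 := by
  simp [Measure.real, hr, mul_comm]

theorem Complex.integrable_rpow_neg_two_one_add_norm_sq :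
    Integrable fun z : ℂ => (1 + ‖z‖ ^ 2) ^ (-2 : ℝ) := by
  convert integrable_rpow_neg_one_add_norm_sq (E := ℂ) (μ := volume) (r := 4) (by norm_num) using 3
  norm_num

theorem one_add_norm_sq_le_of_dist_le {E : Type*} [SeminormedAddCommGroup E] {x y : E} {ε : ℝ}
    (h : dist x y ≤ ε) : 1 + ‖x‖ ^ 2 ≤ 2 * (1 + ε ^ 2) * (1 + ‖y‖ ^ 2) := by
  have hx : ‖x‖ ≤ ‖y‖ + ε := by
    have := norm_le_norm_add_norm_sub' x y
    rw [dist_eq_norm] at h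
    linarith
  have hε : 0 ≤ ε := dist_nonneg.trans h
  nlinarith [norm_nonneg x, norm_nonneg y, sq_nonneg (‖y‖ - ε),
    mul_nonneg (sq_nonneg ε) (sq_nonneg ‖y‖)]

theorem one_add_norm_sq_le_exp_of_mul_log_le {E : Type*} [SeminormedAddCommGroup E] {x : E}
    {K t : ℝ} (hK : 0 < K) (h : K * Real.log (1 + ‖x‖ ^ 2) ≤ t) :
    1 + ‖x‖ ^ 2 ≤ Real.exp (t / K) := by
  rw [← Real.log_le_iff_le_exp (by positivity), le_div_iff₀ hK, mul_comm]
  exact h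

theorem le_setIntegral_ball_of_mul_log_le {K t ε r : ℝ} {γ : ℂ} (hK : 0 < K) (hr : 0 ≤ r)
    (hrε : r ≤ ε) (hγ : K * Real.log (1 + ‖γ‖ ^ 2) ≤ t) :
    π * r ^ 2 * (Real.exp (-(2 / K) * t) / (2 * (1 + ε ^ 2)) ^ 2) ≤
      ∫ z in ball γ r, (1 + ‖z‖ ^ 2) ^ (-2 : ℝ) := by
  rw [← Complex.measureReal_ball γ hr, mul_comm]
  refine setIntegral_ge_of_const_le_real measurableSet_ball measure_ball_lt_top.ne
    (fun z hz => ?_) Complex.integrable_rpow_neg_two_one_add_norm_sq.integrableOn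
  have hz : 1 + ‖z‖ ^ 2 ≤ 2 * (1 + ε ^ 2) * Real.exp (t / K) :=
    (one_add_norm_sq_le_of_dist_le ((mem_ball.1 hz).le.trans hrε)).trans
      (by gcongr; exact one_add_norm_sq_le_exp_of_mul_log_le hK hγ)
  calc Real.exp (-(2 / K) * t) / (2 * (1 + ε ^ 2)) ^ 2
      = (2 * (1 + ε ^ 2) * Real.exp (t / K)) ^ (-2 : ℝ) := by
        rw [Real.mul_rpow (by positivity) (Real.exp_pos _).le, ← Real.exp_mul,
          Real.rpow_neg (by positivity), Real.rpow_two, div_eq_inv_mul]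
        ring_nf
    _ ≤ (1 + ‖z‖ ^ 2) ^ (-2 : ℝ) := Real.rpow_le_rpow_of_nonpos (by positivity) hz (by norm_num)

theorem exp_neg_mul_le_setIntegral_ball {K C₀ ε t : ℝ} {γ : ℂ} (hK : 0 < K) (hε : 0 < ε)
    (hC₀ : 0 ≤ C₀) (ht : 0 ≤ t) (hγ : K * Real.log (1 + ‖γ‖ ^ 2) ≤ t) :
    Real.exp (-(2 * C₀ + 2 / K) * t) ≤ ∫ z in ball γ (ε * Real.exp (-C₀ * t)),
      (2 * (1 + ε ^ 2)) ^ 2 / (π * ε ^ 2) * (1 + ‖z‖ ^ 2) ^ (-2 : ℝ) := by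
  have hr : ε * Real.exp (-C₀ * t) ≤ ε :=
    mul_le_of_le_one_right hε.le (Real.exp_le_one_iff.2 (by nlinarith))
  rw [integral_const_mul]
  refine le_trans (le_of_eq ?_) (mul_le_mul_of_nonneg_left
    (le_setIntegral_ball_of_mul_log_le hK (by positivity) hr hγ) (by positivity))
  rw [show -(2 * C₀ + 2 / K) * t = -C₀ * t + -C₀ * t + -(2 / K) * t by ring, Real.exp_add,
    Real.exp_add]
  field_simp

theorem stmt13 (p : ℂ → ℝ) (hp : IsWeight p) (Γ : Set ℂ)
    (hw : WeaklySeparated p Γ) :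
    ∃ C > 0, Summable (fun γ : Γ => Real.exp (-C * p γ)) := by
  obtain ⟨hp0, ⟨K, hK, hKp⟩, -⟩ := hp
  obtain ⟨ε, hε, C₀, hC₀, hdisj⟩ := hw
  refine ⟨2 * C₀ + 2 / K, by positivity, ?_⟩
  refine summable_of_le_setIntegral_of_pairwise_disjoint (μ := volume)
    (s := fun γ : Γ => ball (γ : ℂ) (ε * Real.exp (-C₀ * p γ))) (fun _ => (Real.exp_pos _).le)
    (fun _ => measurableSet_ball)
    (fun γ δ hne => hdisj γ γ.2 δ δ.2 (Subtype.coe_injective.ne hne))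
    (Complex.integrable_rpow_neg_two_one_add_norm_sq.const_mul _)
    (fun z => by positivity)
    (fun γ => exp_neg_mul_le_setIntegral_ball hK hε hC₀.le (hp0 γ) (hKp γ))
end

section
/- Let ω ∈ X^{n-1}_p(Λ) and let α₁,…,α_k (k ≤ n) be the points of Λ in a disk D_λ of the covering. Then the Newton interpolation polynomial P_λ(z) = Δ⁰ω(α₁) + Δ¹ω(α₁,α₂)(z−α₁) + ⋯ + Δ^{k-1}ω(α₁,…,α_k)∏_{j=1}^{k-1}(z−α_j) satisfies P_λ(α_i) = ω(α_i) for all i and the growth bound |P_λ(z)| ≤ A e^{B'(p(z)+p(λ))} for all z ∈ ℂ, for constants A, B' independent of λ. -/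
open Complex Metric Set

/-- Newton interpolation polynomial built from divided differences:
`P(z) = Δ⁰ω(α₁) + Δ¹ω(α₁,α₂)(z-α₁) + ⋯ + Δ^{k-1}ω(α₁,…,α_k)∏_{j<k-1}(z-α_j)`. -/
noncomputable def newtonPoly (ω : ℂ → ℂ) {k : ℕ} (α : Fin k → ℂ) (z : ℂ) : ℂ :=
  ∑ i : Fin k,
    divDiff (i : ℕ) ω (fun j : Fin ((i : ℕ) + 1) => α (Fin.castLE i.isLt j)) *
      ∏ j : Fin (i : ℕ), (z - α ⟨(j : ℕ), j.isLt.trans i.isLt⟩)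

/-!
In Lagrange form, `Δᵐω(w) = ∑ᵢ ω(wᵢ) ∏_{j ≠ i} (wᵢ - wⱼ)⁻¹`, so removing node `q` instead of node `p`
changes a divided difference by `(w p - w q) Δᵐ⁺¹ω(w)`. Applied to the last two nodes, this is exactly
what is needed to show by induction that the Newton polynomial interpolates at its last node.

For the growth bound all nodes lie within distance `1` of `λ`, so `p(αᵢ) ≤ D₀ p(λ) + E₀` controls
every divided difference, while `p(z) ≥ K log (1 + |z|²)` gives `|z| ≤ e^{p(z)/2K}` and hence
`|z - αⱼ| ≤ 3 e^{(p(z) + p(λ))/2K}`.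
-/

open Finset Lagrange

theorem Fin.prod_univ_erase_succAbove {M : Type*} [CommMonoid M] {m : ℕ} (f : Fin (m + 2) → M)
    (p : Fin (m + 2)) (i : Fin (m + 1)) :
    ∏ j ∈ univ.erase (p.succAbove i), f j = f p * ∏ j ∈ univ.erase i, f (p.succAbove j) := by
  simp only [← filter_ne', prod_filter, Fin.prod_univ_succAbove _ p, ne_eq,
    Fin.succAbove_right_inj, (Fin.succAbove_ne p i).symm, not_false_eq_true, if_true]

section Nodal

variable {F : Type*} [Field F] {m : ℕ} {w : Fin (m + 2) → F}

theorem nodalWeight_comp_succAbove (hw : Function.Injective w) (p : Fin (m + 2))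
    (i : Fin (m + 1)) :
    nodalWeight univ (w ∘ p.succAbove) i =
      (w (p.succAbove i) - w p) * nodalWeight univ w (p.succAbove i) := by
  have hne : w (p.succAbove i) - w p ≠ 0 := sub_ne_zero.mpr (hw.ne (Fin.succAbove_ne p i))
  simp only [nodalWeight, Fin.prod_univ_erase_succAbove, Function.comp_apply]
  rw [← mul_assoc, mul_inv_cancel₀ hne, one_mul]

theorem sum_nodalWeight_comp_succAbove (hw : Function.Injective w) (p : Fin (m + 2))
    (f : F → F) :
    ∑ i, nodalWeight univ (w ∘ p.succAbove) i * f (w (p.succAbove i)) =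
      ∑ i, (w i - w p) * nodalWeight univ w i * f (w i) := by
  simp only [Fin.sum_univ_succAbove (fun i => (w i - w p) * nodalWeight univ w i * f (w i)) p,
    sub_self, zero_mul, zero_add, nodalWeight_comp_succAbove hw]

theorem sum_nodalWeight_comp_succAbove_sub (hw : Function.Injective w) (p q : Fin (m + 2))
    (f : F → F) :
    ∑ i, nodalWeight univ (w ∘ q.succAbove) i * f (w (q.succAbove i)) -
        ∑ i, nodalWeight univ (w ∘ p.succAbove) i * f (w (p.succAbove i)) =
      (w p - w q) * ∑ i, nodalWeight univ w i * f (w i) := by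
  simp only [sum_nodalWeight_comp_succAbove hw, ← sum_sub_distrib, mul_sum]
  exact sum_congr rfl fun i _ => by ring

end Nodal

section Newton

variable (ω : ℂ → ℂ)

theorem divDiff_eq_sum_nodalWeight :
    ∀ {m : ℕ} (w : Fin (m + 1) → ℂ), Function.Injective w →
      divDiff m ω w = ∑ i, nodalWeight univ w i * ω (w i)
  | 0, w, _ => by simp [divDiff, nodalWeight]
  | m + 1, w, hw => by
    have hsub : w (Fin.last (m + 1)) - w 0 ≠ 0 :=
      sub_ne_zero.mpr (hw.ne (Fin.last_pos.ne'))
    have key := sum_nodalWeight_comp_succAbove_sub hw (Fin.last (m + 1)) 0 ω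
    simp only [Fin.succAbove_zero, Fin.succAbove_last] at key
    rw [divDiff, div_eq_iff hsub, mul_comm, ← key,
      divDiff_eq_sum_nodalWeight (fun i => w i.succ) (hw.comp (Fin.succ_injective _)),
      divDiff_eq_sum_nodalWeight (fun i => w i.castSucc) (hw.comp (Fin.castSucc_injective _))]
    rfl

theorem divDiff_comp_succAbove_sub {m : ℕ} (w : Fin (m + 2) → ℂ) (hw : Function.Injective w)
    (p q : Fin (m + 2)) :
    divDiff m ω (w ∘ q.succAbove) - divDiff m ω (w ∘ p.succAbove) =
      (w p - w q) * divDiff (m + 1) ω w := by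
  rw [divDiff_eq_sum_nodalWeight ω _ (hw.comp Fin.succAbove_right_injective),
    divDiff_eq_sum_nodalWeight ω _ (hw.comp Fin.succAbove_right_injective),
    divDiff_eq_sum_nodalWeight ω w hw]
  exact sum_nodalWeight_comp_succAbove_sub hw p q ω

theorem newtonPoly_succ {k : ℕ} (β : Fin (k + 1) → ℂ) (z : ℂ) :
    newtonPoly ω β z =
      newtonPoly ω (β ∘ Fin.castSucc) z + divDiff k ω β * ∏ j : Fin k, (z - β j.castSucc) := by
  rw [newtonPoly, Fin.sum_univ_castSucc]
  rfl

theorem newtonPoly_apply_last :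
    ∀ {k : ℕ} (u : Fin (k + 1) → ℂ), Function.Injective u →
      newtonPoly ω u (u (Fin.last k)) = ω (u (Fin.last k))
  | 0, u, _ => by simp [newtonPoly, divDiff]
  | k + 1, u, hu => by
    -- `v` drops the second-to-last node, so its Newton polynomial differs from that of `u` only in
    -- the last two terms, which `divDiff_comp_succAbove_sub` matches.
    set v := u ∘ (Fin.last k).castSucc.succAbove
    have hv_last : v (Fin.last k) = u (Fin.last (k + 1)) := by
      simp [v]
    have hv_init : v ∘ Fin.castSucc = u ∘ Fin.castSucc ∘ Fin.castSucc :=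
      funext fun j => congrArg u (Fin.succAbove_castSucc_of_lt _ _ (Fin.castSucc_lt_last j))
    have ih := newtonPoly_apply_last v (hu.comp Fin.succAbove_right_injective)
    rw [newtonPoly_succ, hv_last, hv_init] at ih
    simp only [show ∀ j : Fin k, v j.castSucc = u j.castSucc.castSucc from congrFun hv_init] at ih
    have hrec := divDiff_comp_succAbove_sub ω u hu (Fin.last (k + 1)) (Fin.last k).castSucc
    rw [Fin.succAbove_last] at hrec
    rw [newtonPoly_succ, newtonPoly_succ ω (u ∘ Fin.castSucc), Fin.prod_univ_castSucc]
    simp only [Function.comp_assoc, Function.comp_apply]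
    linear_combination ih - (∏ j : Fin k, (u (Fin.last (k + 1)) - u j.castSucc.castSucc)) * hrec

theorem newtonPoly_apply_self :
    ∀ {k : ℕ} (α : Fin k → ℂ), Function.Injective α → ∀ i, newtonPoly ω α (α i) = ω (α i)
  | 0, _, _, i => i.elim0
  | k + 1, α, hα, i => by
    rcases Fin.eq_castSucc_or_eq_last i with ⟨i, rfl⟩ | rfl
    · rw [newtonPoly_succ, prod_eq_zero (mem_univ i) (sub_self _), mul_zero, add_zero]
      exact newtonPoly_apply_self (α ∘ Fin.castSucc) (hα.comp (Fin.castSucc_injective k)) i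
    · exact newtonPoly_apply_last ω α hα

theorem norm_newtonPoly_le {k n : ℕ} (hkn : k ≤ n) (α : Fin k → ℂ) (z : ℂ) {a M : ℝ}
    (ha0 : 0 ≤ a) (ha : ∀ i : Fin k, ‖divDiff i ω (fun j => α (Fin.castLE i.isLt j))‖ ≤ a)
    (hM : 1 ≤ M) (hz : ∀ i, ‖z - α i‖ ≤ M) :
    ‖newtonPoly ω α z‖ ≤ n * a * M ^ n := by
  calc ‖newtonPoly ω α z‖ ≤ ∑ _i : Fin k, a * M ^ n := by
        refine (norm_sum_le _ _).trans (sum_le_sum fun i _ => ?_)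
        rw [norm_mul, norm_prod]
        gcongr
        · exact ha i
        calc ∏ j : Fin i, ‖z - α ⟨j, j.isLt.trans i.isLt⟩‖ ≤ ∏ _j : Fin i, M :=
              prod_le_prod (fun _ _ => norm_nonneg _) fun _ _ => hz _
          _ = M ^ (i : ℕ) := by simp
          _ ≤ M ^ n := pow_le_pow_right₀ hM (by omega)
    _ = k * (a * M ^ n) := by simp
    _ ≤ n * a * M ^ n := by
        rw [← mul_assoc]
        gcongr

end Newton

theorem norm_le_exp_of_mul_log_le {K t : ℝ} {z : ℂ} (hK : 0 < K)
    (h : K * Real.log (1 + ‖z‖ ^ 2) ≤ t) : ‖z‖ ≤ Real.exp (t / (2 * K)) := by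
  have hlog : 1 + ‖z‖ ^ 2 ≤ Real.exp (t / K) := by
    rw [← Real.log_le_iff_le_exp (by positivity), le_div_iff₀ hK]
    linarith
  have hsq : Real.exp (t / (2 * K)) ^ 2 = Real.exp (t / K) := by
    rw [← Real.exp_nat_mul]
    congr 1
    field_simp
    ring
  exact (pow_le_pow_iff_left₀ (norm_nonneg z) (Real.exp_pos _).le two_ne_zero).1 (by linarith)

theorem norm_sub_le_three_mul_exp {p : ℂ → ℝ} {K : ℝ} (hp0 : ∀ z, 0 ≤ p z) (hK : 0 < K)
    (hKp : ∀ z : ℂ, K * Real.log (1 + ‖z‖ ^ 2) ≤ p z) {z a l : ℂ} (ha : ‖a - l‖ ≤ 1) :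
    ‖z - a‖ ≤ 3 * Real.exp ((p z + p l) / (2 * K)) := by
  have hz := norm_le_exp_of_mul_log_le hK (hKp z)
  have hl := norm_le_exp_of_mul_log_le hK (hKp l)
  have hmono : ∀ t, 0 ≤ t → t ≤ p z + p l →
      Real.exp (t / (2 * K)) ≤ Real.exp ((p z + p l) / (2 * K)) := fun t _ ht => by
    gcongr
  have h0 := hmono 0 le_rfl (add_nonneg (hp0 z) (hp0 l))
  have h1 := hmono (p z) (hp0 z) (by linarith [hp0 l])
  have h2 := hmono (p l) (hp0 l) (by linarith [hp0 z])
  rw [zero_div, Real.exp_zero] at h0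
  calc ‖z - a‖ = ‖z - (a - l) - l‖ := by ring_nf
    _ ≤ ‖z‖ + ‖a - l‖ + ‖l‖ := (norm_sub_le _ _).trans (by gcongr; exact norm_sub_le _ _)
    _ ≤ 3 * Real.exp ((p z + p l) / (2 * K)) := by linarith

theorem sum_le_card_mul_of_norm_sub_le {ι : Type*} [Fintype ι] {p : ℂ → ℝ} {D E : ℝ}
    (hDE : ∀ z w : ℂ, ‖z - w‖ ≤ 1 → p z ≤ D * p w + E) {z : ι → ℂ} {l : ℂ}
    (hz : ∀ i, ‖z i - l‖ ≤ 1) : ∑ i, p (z i) ≤ Fintype.card ι * (D * p l + E) := by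
  simpa only [card_univ, nsmul_eq_mul] using sum_le_card_nsmul univ _ _ fun i _ => hDE _ _ (hz i)

theorem MemX.eventually_norm_divDiff_le {p : ℂ → ℝ} {Λ : Set ℂ} {j : ℕ} {ω : ℂ → ℂ}
    (hp0 : ∀ z, 0 ≤ p z) (h : MemX p Λ j ω) :
    ∀ᶠ C in Filter.atTop, ∀ z : Fin (j + 1) → ℂ, (∀ i, z i ∈ Λ) → Function.Injective z →
      ‖divDiff j ω z‖ ≤ C * Real.exp (C * ∑ i, p (z i)) := by
  obtain ⟨A, hA, B, -, hAB⟩ := h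
  filter_upwards [Filter.eventually_ge_atTop (max A B)] with C hC z hzΛ hz
  have hsum : 0 ≤ ∑ i, p (z i) := sum_nonneg fun i _ => hp0 (z i)
  calc ‖divDiff j ω z‖ ≤ A * Real.exp (B * ∑ i, p (z i)) := hAB z hzΛ hz
    _ ≤ C * Real.exp (C * ∑ i, p (z i)) := by
        have hAC : A ≤ C := (le_max_left A B).trans hC
        have hBC : B ≤ C := (le_max_right A B).trans hC
        gcongr
        exact hA.le.trans hAC

theorem exists_forall_norm_divDiff_le {p : ℂ → ℝ} {Λ : Set ℂ} {m : ℕ} {ω : ℂ → ℂ}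
    (hp0 : ∀ z, 0 ≤ p z) (hω : ∀ j, j ≤ m → MemX p Λ j ω) :
    ∃ C > 0, ∀ j ≤ m, ∀ z : Fin (j + 1) → ℂ, (∀ i, z i ∈ Λ) → Function.Injective z →
      ‖divDiff j ω z‖ ≤ C * Real.exp (C * ∑ i, p (z i)) := by
  have h := (Filter.eventually_all_finite (finite_Iic m)).2 fun j hj =>
    (hω j hj).eventually_norm_divDiff_le hp0
  obtain ⟨C, hC, hpos⟩ := (h.and (Filter.eventually_gt_atTop 0)).exists
  exact ⟨C, hpos, hC⟩

theorem stmt16 (p : ℂ → ℝ) (hp : IsWeight p) (Λ : Set ℂ) (n : ℕ) (hn : 1 ≤ n)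
    (ω : ℂ → ℂ) (hω : ∀ j, j ≤ n - 1 → MemX p Λ j ω) :
    ∃ A > (0:ℝ), ∃ B' > (0:ℝ), ∀ (l : ℂ) (k : ℕ), 1 ≤ k → k ≤ n →
      ∀ α : Fin k → ℂ, Function.Injective α → (∀ i, α i ∈ Λ) →
        (∀ i, ‖α i - l‖ ≤ 1) →
        (∀ i, newtonPoly ω α (α i) = ω (α i)) ∧
        (∀ z, ‖newtonPoly ω α z‖ ≤ A * Real.exp (B' * (p z + p l))) := by
  obtain ⟨hp0, ⟨K, hK, hKp⟩, D, hD, E, hE, hDE⟩ := hp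
  obtain ⟨C, hC, hdiv⟩ := exists_forall_norm_divDiff_le hp0 hω
  refine ⟨n * C * 3 ^ n * Real.exp (C * n * E), by positivity, n * (C * D + 1 / (2 * K)),
    by positivity, fun l k _ hkn α hα hαΛ hαl => ⟨newtonPoly_apply_self ω α hα, fun z => ?_⟩⟩
  have hdiv_near : ∀ i : Fin k, ‖divDiff i ω (fun j => α (Fin.castLE i.isLt j))‖ ≤
      C * Real.exp (C * (n * (D * p l + E))) := fun i => by
    refine (hdiv i (by omega) _ (fun j => hαΛ _) (hα.comp (Fin.castLE_injective _))).trans ?_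
    have hsum := sum_le_card_mul_of_norm_sub_le hDE fun j : Fin (i + 1) => hαl (Fin.castLE i.isLt j)
    have hnear : 0 ≤ D * p l + E := by nlinarith [hp0 l]
    rw [Fintype.card_fin] at hsum
    gcongr
    exact hsum.trans (by gcongr; omega)
  have hs : 0 ≤ (p z + p l) / (2 * K) := div_nonneg (add_nonneg (hp0 z) (hp0 l)) (by positivity)
  calc ‖newtonPoly ω α z‖
      ≤ n * (C * Real.exp (C * (n * (D * p l + E)))) *
          (3 * Real.exp ((p z + p l) / (2 * K))) ^ n :=
        norm_newtonPoly_le ω hkn α z (by positivity) hdiv_near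
          (by linarith [Real.one_le_exp hs]) fun i => norm_sub_le_three_mul_exp hp0 hK hKp (hαl i)
    _ = n * C * 3 ^ n * Real.exp (C * n * E) *
          Real.exp (C * n * D * p l + n * ((p z + p l) / (2 * K))) := by
        rw [mul_pow, ← Real.exp_nat_mul, show C * (n * (D * p l + E)) = C * n * E + C * n * D * p l
          by ring, Real.exp_add, Real.exp_add]
        ring
    _ ≤ n * C * 3 ^ n * Real.exp (C * n * E) *
          Real.exp (n * (C * D + 1 / (2 * K)) * (p z + p l)) := by
        have hpz : 0 ≤ C * n * D * p z := by have := hp0 z; positivity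
        gcongr
        linarith [show n * (C * D + 1 / (2 * K)) * (p z + p l) =
          C * n * D * p l + n * ((p z + p l) / (2 * K)) + C * n * D * p z by ring]
end
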